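/- arXiv:2012.01885 — 4 statements merged into one kernel-verified Lean document; each statement's English description precedes it below -/
import Mathlib

section
/- For every n ≥ 1 there exists a bijection φ_1 : B_n → B_n such that for all π ∈ B_n, Des(π) = Des_r(φ_1(π)) and Des_r(π) = Des(φ_1(π)), where Des is the descent set with respect to the usual order on integers and Des_r is the descent set with respect to the order -1 <_r -2 <_r ... <_r -n <_r 0 <_r 1 <_r ... <_r n. -/
/-- A signed permutation in the hyperoctahedral group `B_n`, encoded by its
values on positions `1,…,n` (with `π 0 = 0` and `π i = 0` for `i > n`). -/
def IsSignedPerm (n : ℕ) (π : ℕ → ℤ) : Prop :=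
  π 0 = 0 ∧ (∀ i, n < i → π i = 0) ∧
  (∀ i ∈ Finset.Icc 1 n, 1 ≤ (π i).natAbs ∧ (π i).natAbs ≤ n) ∧
  (∀ i ∈ Finset.Icc 1 n, ∀ j ∈ Finset.Icc 1 n, (π i).natAbs = (π j).natAbs → i = j)

/-- The type B descent set `Des(π) = {0 ≤ i ≤ n-1 : π(i) > π(i+1)}` (with `π 0 = 0`). -/
def DesSet (n : ℕ) (π : ℕ → ℤ) : Finset ℕ :=
  (Finset.range n).filter (fun i => π (i + 1) < π i)
/-- Order key for the total order `-1 <_r -2 <_r … <_r -n <_r 0 <_r 1 <_r … <_r n`. -/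
def rkey (n : ℕ) (x : ℤ) : ℤ := if x < 0 then -x - (n + 1) else x

/-- The descent set with respect to the order `<_r`. -/
def DesRSet (n : ℕ) (π : ℕ → ℤ) : Finset ℕ :=
  (Finset.range n).filter (fun i => rkey n (π (i + 1)) < rkey n (π i))

/-! ### Auxiliary: the order-reversing involution of a finite set of integers -/

noncomputable def mirror (S : Finset ℤ) (x : ℤ) : ℤ :=
  if h : x ∈ S then ((S.orderIsoOfFin rfl) (Fin.rev ((S.orderIsoOfFin rfl).symm ⟨x, h⟩)) : ℤ) else x

lemma mirror_mem {S : Finset ℤ} {x : ℤ} (h : x ∈ S) : mirror S x ∈ S := by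
  simp only [mirror, dif_pos h]
  exact ((S.orderIsoOfFin rfl) (Fin.rev ((S.orderIsoOfFin rfl).symm ⟨x, h⟩))).2

lemma mirror_mirror {S : Finset ℤ} {x : ℤ} (h : x ∈ S) : mirror S (mirror S x) = x := by
  have h2 := mirror_mem h
  simp only [mirror, dif_pos h] at h2 ⊢
  rw [dif_pos h2]
  set e := S.orderIsoOfFin rfl
  rw [show (⟨(e (Fin.rev (e.symm ⟨x,h⟩)) : ℤ), h2⟩ : {y // y ∈ S}) = e (Fin.rev (e.symm ⟨x, h⟩)) from Subtype.ext rfl]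
  rw [e.symm_apply_apply, Fin.rev_rev, e.apply_symm_apply]

lemma mirror_lt_mirror {S : Finset ℤ} {x y : ℤ} (hx : x ∈ S) (hy : y ∈ S) (h : x < y) :
    mirror S y < mirror S x := by
  simp only [mirror, dif_pos hx, dif_pos hy]
  set e := S.orderIsoOfFin rfl
  have h1 : e.symm ⟨x, hx⟩ < e.symm ⟨y, hy⟩ := by
    rw [e.symm.lt_iff_lt]; exact Subtype.mk_lt_mk.mpr h
  have h2 : Fin.rev (e.symm ⟨y, hy⟩) < Fin.rev (e.symm ⟨x, hx⟩) := Fin.rev_lt_rev.mpr h1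
  exact_mod_cast e.lt_iff_lt.mpr h2

lemma mirror_lt_iff {S : Finset ℤ} {x y : ℤ} (hx : x ∈ S) (hy : y ∈ S) :
    mirror S x < mirror S y ↔ y < x := by
  constructor
  · intro h
    have := mirror_lt_mirror (mirror_mem hx) (mirror_mem hy) h
    rwa [mirror_mirror hx, mirror_mirror hy] at this
  · exact fun h => mirror_lt_mirror hy hx h

/-! ### The map `φ₁` -/

/-- The set of negative values of `π`. -/
noncomputable def negvals (n : ℕ) (π : ℕ → ℤ) : Finset ℤ :=
  ((Finset.Icc 1 n).image π).filter (fun x => x < 0)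

/-- `φ₁` : keep nonnegative entries, reverse the relative order of the negative entries. -/
noncomputable def phi1 (n : ℕ) (π : ℕ → ℤ) : ℕ → ℤ :=
  fun p => if π p < 0 then mirror (negvals n π) (π p) else π p

lemma mem_negvals {n : ℕ} {π : ℕ → ℤ} {y : ℤ} :
    y ∈ negvals n π ↔ (∃ p ∈ Finset.Icc 1 n, π p = y) ∧ y < 0 := by
  simp [negvals]

lemma negvals_neg {n : ℕ} {π : ℕ → ℤ} {y : ℤ} (h : y ∈ negvals n π) : y < 0 :=
  (mem_negvals.mp h).2

lemma pos_mem {n : ℕ} {π : ℕ → ℤ} (hπ : IsSignedPerm n π) {p : ℕ} (h : π p ≠ 0) :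
    p ∈ Finset.Icc 1 n := by
  obtain ⟨h0, hgt, -, -⟩ := hπ
  rw [Finset.mem_Icc]
  constructor
  · rcases Nat.eq_zero_or_pos p with rfl | hp
    · exact absurd h0 h
    · exact hp
  · by_contra hc
    exact h (hgt p (by omega))

lemma val_mem_negvals {n : ℕ} {π : ℕ → ℤ} (hπ : IsSignedPerm n π) {p : ℕ}
    (h : π p < 0) : π p ∈ negvals n π :=
  mem_negvals.mpr ⟨⟨p, pos_mem hπ (by omega), rfl⟩, h⟩

lemma negvals_bound {n : ℕ} {π : ℕ → ℤ} (hπ : IsSignedPerm n π) {y : ℤ}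
    (h : y ∈ negvals n π) : -(n : ℤ) ≤ y ∧ y < 0 := by
  obtain ⟨⟨p, hp, rfl⟩, hneg⟩ := mem_negvals.mp h
  have := hπ.2.2.1 p hp
  refine ⟨?_, hneg⟩
  have habs := this.2
  omega

lemma phi1_apply (n : ℕ) (π : ℕ → ℤ) (p : ℕ) :
    phi1 n π p = if π p < 0 then mirror (negvals n π) (π p) else π p := rfl

lemma phi1_of_nonneg {n : ℕ} {π : ℕ → ℤ} {p : ℕ} (h : 0 ≤ π p) : phi1 n π p = π p := by
  simp [phi1, not_lt.mpr h]

lemma phi1_of_neg {n : ℕ} {π : ℕ → ℤ} (hπ : IsSignedPerm n π) {p : ℕ} (h : π p < 0) :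
    phi1 n π p = mirror (negvals n π) (π p) ∧ phi1 n π p ∈ negvals n π := by
  have h1 : phi1 n π p = mirror (negvals n π) (π p) := by simp [phi1, h]
  exact ⟨h1, h1 ▸ mirror_mem (val_mem_negvals hπ h)⟩

lemma negvals_phi1 {n : ℕ} {π : ℕ → ℤ} (hπ : IsSignedPerm n π) :
    negvals n (phi1 n π) = negvals n π := by
  ext y
  constructor
  · intro hy
    obtain ⟨⟨p, hp, hval⟩, hneg⟩ := mem_negvals.mp hy
    by_cases h : π p < 0
    · obtain ⟨h1, h2⟩ := phi1_of_neg hπ h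
      rw [← hval]; exact h2
    · rw [phi1_of_nonneg (not_lt.mp h)] at hval
      omega
  · intro hy
    obtain ⟨⟨p, hp, hval⟩, hneg⟩ := mem_negvals.mp hy
    have hm : mirror (negvals n π) y ∈ negvals n π := mirror_mem hy
    obtain ⟨⟨q, hq, hqval⟩, hqneg⟩ := mem_negvals.mp hm
    have hπq : π q < 0 := by omega
    obtain ⟨h1, -⟩ := phi1_of_neg hπ hπq
    refine mem_negvals.mpr ⟨⟨q, hq, ?_⟩, hneg⟩
    rw [h1, hqval, mirror_mirror hy]

lemma phi1_involutive {n : ℕ} {π : ℕ → ℤ} (hπ : IsSignedPerm n π) :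
    phi1 n (phi1 n π) = π := by
  funext p
  by_cases h : π p < 0
  · obtain ⟨h1, h2⟩ := phi1_of_neg hπ h
    have hneg : phi1 n π p < 0 := negvals_neg h2
    have : phi1 n (phi1 n π) p = mirror (negvals n (phi1 n π)) (phi1 n π p) := by
      rw [phi1_apply n (phi1 n π) p, if_pos hneg]
    rw [this, negvals_phi1 hπ, h1, mirror_mirror (val_mem_negvals hπ h)]
  · have h1 : phi1 n π p = π p := phi1_of_nonneg (not_lt.mp h)
    have : phi1 n (phi1 n π) p = phi1 n π p := by
      rw [phi1_of_nonneg (by rw [h1]; exact not_lt.mp h)]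
    rw [this, h1]

lemma phi1_isSignedPerm {n : ℕ} {π : ℕ → ℤ} (hπ : IsSignedPerm n π) :
    IsSignedPerm n (phi1 n π) := by
  obtain ⟨h0, hgt, hbnd, hinj⟩ := hπ
  have hval : ∀ p ∈ Finset.Icc 1 n, ∃ q ∈ Finset.Icc 1 n, phi1 n π p = π q := by
    intro p hp
    by_cases h : π p < 0
    · obtain ⟨h1, h2⟩ := phi1_of_neg ⟨h0, hgt, hbnd, hinj⟩ h
      obtain ⟨⟨q, hq, hqval⟩, -⟩ := mem_negvals.mp h2
      exact ⟨q, hq, hqval.symm⟩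
    · exact ⟨p, hp, phi1_of_nonneg (not_lt.mp h)⟩
  refine ⟨?_, ?_, ?_, ?_⟩
  · rw [phi1_of_nonneg (by rw [h0])]; exact h0
  · intro i hi; rw [phi1_of_nonneg (by rw [hgt i hi])]; exact hgt i hi
  · intro i hi
    obtain ⟨q, hq, hval⟩ := hval i hi
    rw [hval]; exact hbnd q hq
  · intro i hi j hj habs
    obtain ⟨qi, hqi, hvi⟩ := hval i hi
    obtain ⟨qj, hqj, hvj⟩ := hval j hj
    rw [hvi, hvj] at habs
    have hq : qi = qj := hinj qi hqi qj hqj habs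
    -- π qi = phi1 n π i and π qj = phi1 n π j, so phi1 i = phi1 j
    have hval_eq : phi1 n π i = phi1 n π j := by rw [hvi, hvj, hq]
    -- phi1 is injective on positions: apply phi1 again
    have := congrArg (fun f => phi1 n f i) (phi1_involutive ⟨h0, hgt, hbnd, hinj⟩)
    -- instead: use that phi1 determines π via involution
    have h2 : π i = π j := by
      have hinv := phi1_involutive (π := π) ⟨h0, hgt, hbnd, hinj⟩
      calc π i = phi1 n (phi1 n π) i := by rw [hinv]
        _ = phi1 n (phi1 n π) j := by
            rw [phi1_apply n (phi1 n π) i, phi1_apply n (phi1 n π) j, hval_eq]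
        _ = π j := by rw [hinv]
    exact hinj i hi j hj (by rw [h2])

lemma rkey_nonneg {n : ℕ} {x : ℤ} (h : 0 ≤ x) : rkey n x = x := by
  simp [rkey, not_lt.mpr h]

lemma rkey_neg {n : ℕ} {x : ℤ} (h : x < 0) : rkey n x = -x - (n + 1) := by
  simp [rkey, h]

/-- There is a bijection `φ₁ : B_n → B_n` exchanging the descent set for the usual
order with the descent set for the order `<_r`. -/
theorem exists_phi1 (n : ℕ) (hn : 1 ≤ n) :
    ∃ φ : (ℕ → ℤ) → (ℕ → ℤ),
      Set.BijOn φ {π | IsSignedPerm n π} {π | IsSignedPerm n π} ∧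
      ∀ π : ℕ → ℤ, IsSignedPerm n π →
        DesSet n π = DesRSet n (φ π) ∧ DesRSet n π = DesSet n (φ π) := by
  refine ⟨phi1 n, ⟨fun π hπ => phi1_isSignedPerm hπ, ?_, ?_⟩, ?_⟩
  · intro π hπ σ hσ h
    calc π = phi1 n (phi1 n π) := (phi1_involutive hπ).symm
      _ = phi1 n (phi1 n σ) := by rw [h]
      _ = σ := phi1_involutive hσ
  · intro π hπ
    exact ⟨phi1 n π, phi1_isSignedPerm hπ, phi1_involutive hπ⟩
  · intro π hπ
    -- pointwise key facts
    have key : ∀ i < n,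
        ((π (i+1) < π i) ↔ (rkey n (phi1 n π (i+1)) < rkey n (phi1 n π i))) ∧
        ((rkey n (π (i+1)) < rkey n (π i)) ↔ (phi1 n π (i+1) < phi1 n π i)) := by
      intro i hi
      have bnd : ∀ p, p ≤ n → -(n : ℤ) ≤ π p ∧ π p ≤ n := by
        intro p hp
        by_cases hz : π p = 0
        · omega
        · have hmem := pos_mem hπ hz
          have := hπ.2.2.1 p hmem
          have h1 : ((π p).natAbs : ℤ) ≤ n := by exact_mod_cast this.2
          omega
      have hai := bnd i (by omega)
      have hbi := bnd (i+1) (by omega)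
      by_cases ha : π i < 0 <;> by_cases hb : π (i+1) < 0
      · -- both negative
        obtain ⟨h1a, h2a⟩ := phi1_of_neg hπ ha
        obtain ⟨h1b, h2b⟩ := phi1_of_neg hπ hb
        have hna : phi1 n π i < 0 := negvals_neg h2a
        have hnb : phi1 n π (i+1) < 0 := negvals_neg h2b
        have hma := val_mem_negvals hπ ha
        have hmb := val_mem_negvals hπ hb
        constructor
        · rw [rkey_neg hna, rkey_neg hnb]
          rw [h1a, h1b]
          rw [show (-(mirror (negvals n π) (π (i+1))) - (n+1) <
              -(mirror (negvals n π) (π i)) - (n+1)) ↔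
              (mirror (negvals n π) (π i) < mirror (negvals n π) (π (i+1))) from by omega]
          rw [mirror_lt_iff hma hmb]
        · rw [rkey_neg ha, rkey_neg hb, h1a, h1b, mirror_lt_iff hmb hma]
          omega
      · -- π i < 0 ≤ π (i+1) : no descent anywhere
        have hb' : 0 ≤ π (i+1) := not_lt.mp hb
        obtain ⟨h1a, h2a⟩ := phi1_of_neg hπ ha
        have hna := negvals_bound hπ h2a
        have h1b : phi1 n π (i+1) = π (i+1) := phi1_of_nonneg hb'
        constructor
        · rw [rkey_neg hna.2, rkey_nonneg (h1b ▸ hb'), h1b]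
          constructor <;> intro h <;> omega
        · rw [rkey_neg ha, rkey_nonneg hb', h1a, h1b]
          constructor <;> intro h <;> [omega; skip]
          · exfalso
            have := negvals_neg h2a
            rw [h1a] at this
            omega
      · -- π (i+1) < 0 ≤ π i : descent everywhere
        have ha' : 0 ≤ π i := not_lt.mp ha
        obtain ⟨h1b, h2b⟩ := phi1_of_neg hπ hb
        have hnb := negvals_bound hπ h2b
        have h1a : phi1 n π i = π i := phi1_of_nonneg ha'
        constructor
        · rw [rkey_neg hnb.2, rkey_nonneg (h1a ▸ ha'), h1a]
          constructor <;> intro h <;> omega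
        · rw [rkey_neg hb, rkey_nonneg ha', h1a]
          constructor <;> intro h
          · have := negvals_neg h2b
            omega
          · omega
      · -- both nonneg
        have ha' : 0 ≤ π i := not_lt.mp ha
        have hb' : 0 ≤ π (i+1) := not_lt.mp hb
        have h1a : phi1 n π i = π i := phi1_of_nonneg ha'
        have h1b : phi1 n π (i+1) = π (i+1) := phi1_of_nonneg hb'
        rw [h1a, h1b, rkey_nonneg ha', rkey_nonneg hb']
        exact ⟨Iff.rfl, Iff.rfl⟩
    constructor
    · ext i
      simp only [DesSet, DesRSet, Finset.mem_filter, Finset.mem_range]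
      exact and_congr_right fun hi => (key i hi).1
    · ext i
      simp only [DesSet, DesRSet, Finset.mem_filter, Finset.mem_range]
      exact and_congr_right fun hi => (key i hi).2
end

section
/- For any π ∈ B_n, Des_r(π) = wDes(π) if π(1) > 0, and Des_r(π) = wDes(π) ∪ {0} if π(1) < 0, where wDes(π) = {s ∈ sDes-set of π with s ≠ n and (ε̃(s), ε̃(s+1)) ∈ {(+,+),(-,-),(+,-)}}. -/
/-- The set `S` of the signed descent set `sDes(π) = (S, ε)`. -/
def sDesSet (n : ℕ) (π : ℕ → ℤ) : Finset ℕ :=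
  insert n ((Finset.Icc 1 (n - 1)).filter (fun i =>
    if 0 < π i then π (i + 1) < π i
    else 0 < π (i + 1) ∨ (π (i + 1)).natAbs < (π i).natAbs))

/-- The least element `s_i` of `S` with `j ≤ s_i` (so `s_{i-1} < j ≤ s_i`). -/
def sNext (n : ℕ) (π : ℕ → ℤ) (j : ℕ) : ℕ :=
  WithBot.unbotD n (((sDesSet n π).filter (fun s => j ≤ s)).min)

/-- The extended sign vector `ε̃ : [n] → {+,-}`, as a Boolean (`true` = `+`). -/
def epsT (n : ℕ) (π : ℕ → ℤ) (j : ℕ) : Bool := decide (0 < π (sNext n π j))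

/-- `wDes(π)`: elements `s ≠ n` of `S` with `(ε̃(s), ε̃(s+1)) ≠ (-,+)`. -/
def wDesSet (n : ℕ) (π : ℕ → ℤ) : Finset ℕ :=
  (sDesSet n π).filter (fun s =>
    s ≠ n ∧ ¬(epsT n π s = false ∧ epsT n π (s + 1) = true))

lemma sign_step (n : ℕ) (π : ℕ → ℤ) (hπ : IsSignedPerm n π)
    (k : ℕ) (hk1 : 1 ≤ k) (hk2 : k < n) (hk : k ∉ sDesSet n π) :
    (0 < π k ↔ 0 < π (k + 1)) := by
  obtain ⟨h0, hgt, habs, hinj⟩ := hπ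
  have hk0 : π k ≠ 0 := by
    have := (habs k (by simp [Finset.mem_Icc]; omega)).1
    intro h; simp [h] at this
  have hk10 : π (k + 1) ≠ 0 := by
    have := (habs (k + 1) (by simp [Finset.mem_Icc]; omega)).1
    intro h; simp [h] at this
  simp only [sDesSet, Finset.mem_insert, Finset.mem_filter, Finset.mem_Icc, not_or] at hk
  have hcond : ¬(if 0 < π k then π (k + 1) < π k
      else 0 < π (k + 1) ∨ (π (k + 1)).natAbs < (π k).natAbs) := by
    intro hc
    exact hk.2 ⟨⟨by omega, by omega⟩, hc⟩
  by_cases hp : 0 < π k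
  · rw [if_pos hp] at hcond
    omega
  · rw [if_neg hp] at hcond
    push_neg at hcond
    have := hcond.1
    omega

lemma sNext_spec (n : ℕ) (π : ℕ → ℤ) (j : ℕ) (hj : j ≤ n) :
    j ≤ sNext n π j ∧ sNext n π j ∈ sDesSet n π ∧
    ∀ k, j ≤ k → k < sNext n π j → k ∉ sDesSet n π := by
  have hnT : n ∈ (sDesSet n π).filter (fun s => j ≤ s) := by
    simp [sDesSet, Finset.mem_filter, hj]
  obtain ⟨m, hm⟩ := Finset.min_of_nonempty ⟨n, hnT⟩
  have hmem := Finset.mem_of_min hm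
  simp only [Finset.mem_filter] at hmem
  have hsm : sNext n π j = m := by
    rw [sNext, hm]; rfl
  refine ⟨hsm ▸ hmem.2, hsm ▸ hmem.1, ?_⟩
  intro k hjk hkm hkS
  have : ((sDesSet n π).filter (fun s => j ≤ s)).min ≤ (k : WithBot ℕ) :=
    Finset.min_le (by simp [Finset.mem_filter, hkS, hjk])
  rw [hm] at this
  have : m ≤ k := WithTop.coe_le_coe.mp this
  omega

lemma sDes_le (n : ℕ) (π : ℕ → ℤ) {s : ℕ} (hs : s ∈ sDesSet n π) : s ≤ n := by
  simp only [sDesSet, Finset.mem_insert, Finset.mem_filter, Finset.mem_Icc] at hs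
  omega

lemma epsT_eq (n : ℕ) (π : ℕ → ℤ) (hπ : IsSignedPerm n π)
    (j : ℕ) (hj1 : 1 ≤ j) (hj2 : j ≤ n) :
    epsT n π j = decide (0 < π j) := by
  obtain ⟨hle, hmem, hmin⟩ := sNext_spec n π j hj2
  have hmn : sNext n π j ≤ n := sDes_le n π hmem
  have key : ∀ d k, k + d = sNext n π j → j ≤ k → (0 < π k ↔ 0 < π (sNext n π j)) := by
    intro d
    induction d with
    | zero =>
      intro k hk _
      have : k = sNext n π j := by omega
      rw [this]
    | succ d ih =>
      intro k hk hjk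
      have hstep := sign_step n π hπ k (by omega) (by omega) (hmin k hjk (by omega))
      rw [hstep]
      exact ih (k + 1) (by omega) (by omega)
  have := key (sNext n π j - j) j (by omega) le_rfl
  simp only [epsT]
  exact decide_eq_decide.mpr this.symm

lemma mem_char (n : ℕ) (hn : 1 ≤ n) (π : ℕ → ℤ) (hπ : IsSignedPerm n π)
    (i : ℕ) (h1 : 1 ≤ i) : (i ∈ DesRSet n π ↔ i ∈ wDesSet n π) := by
  by_cases hin : i < n
  · have hi0 : π i ≠ 0 := by
      have := (hπ.2.2.1 i (by simp [Finset.mem_Icc]; omega)).1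
      intro h; simp [h] at this
    have hi10 : π (i + 1) ≠ 0 := by
      have := (hπ.2.2.1 (i + 1) (by simp [Finset.mem_Icc]; omega)).1
      intro h; simp [h] at this
    have hb1 : (π i).natAbs ≤ n := (hπ.2.2.1 i (by simp [Finset.mem_Icc]; omega)).2
    have hb2 : (π (i + 1)).natAbs ≤ n :=
      (hπ.2.2.1 (i + 1) (by simp [Finset.mem_Icc]; omega)).2
    have e1 := epsT_eq n π hπ i h1 (by omega)
    have e2 := epsT_eq n π hπ (i + 1) (by omega) (by omega)
    simp only [DesRSet, wDesSet, sDesSet, Finset.mem_filter, Finset.mem_range,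
      Finset.mem_insert, Finset.mem_Icc, e1, e2, decide_eq_true_eq,
      decide_eq_false_iff_not]
    simp only [rkey]
    rcases lt_or_gt_of_ne hi0 with h|h <;> rcases lt_or_gt_of_ne hi10 with h'|h'
    · rw [if_pos h, if_pos h', if_neg (show ¬ 0 < π i by omega)]
      omega
    · rw [if_pos h, if_neg (show ¬ π (i+1) < 0 by omega),
        if_neg (show ¬ 0 < π i by omega)]
      omega
    · rw [if_neg (show ¬ π i < 0 by omega), if_pos h', if_pos h]
      omega
    · rw [if_neg (show ¬ π i < 0 by omega),
        if_neg (show ¬ π (i+1) < 0 by omega), if_pos h]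
      omega
  · constructor
    · intro hx
      simp only [DesRSet, Finset.mem_filter, Finset.mem_range] at hx
      omega
    · intro hx
      simp only [wDesSet, Finset.mem_filter] at hx
      have := sDes_le n π hx.1
      have := hx.2.1
      omega

/-- `Des_r(π) = wDes(π)` if `π(1) > 0`, and `Des_r(π) = wDes(π) ∪ {0}` if `π(1) < 0`. -/
theorem desR_eq_wDes (n : ℕ) (hn : 1 ≤ n) (π : ℕ → ℤ) (hπ : IsSignedPerm n π) :
    (0 < π 1 → DesRSet n π = wDesSet n π) ∧
    (π 1 < 0 → DesRSet n π = insert 0 (wDesSet n π)) := by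
  have h0 : π 0 = 0 := hπ.1
  have habs1 := hπ.2.2.1 1 (by simp [Finset.mem_Icc]; omega)
  have hchar := fun i h1 => mem_char n hn π hπ i h1
  have h0wdes : 0 ∉ wDesSet n π := by
    intro hx
    simp only [wDesSet, sDesSet, Finset.mem_filter, Finset.mem_insert,
      Finset.mem_Icc] at hx
    omega
  constructor
  · intro hpos
    ext i
    cases i with
    | zero =>
      simp only [DesRSet, Finset.mem_filter, Finset.mem_range]
      simp only [rkey, h0, zero_add,
        if_neg (show ¬ π 1 < 0 by omega), if_neg (show ¬ (0:ℤ) < 0 by omega)]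
      constructor
      · intro hx; omega
      · intro hx; exact absurd hx h0wdes
    | succ i => exact hchar (i + 1) (by omega)
  · intro hneg
    ext i
    cases i with
    | zero =>
      have hb : (π 1).natAbs ≤ n := habs1.2
      simp only [DesRSet, Finset.mem_filter, Finset.mem_range]
      simp only [rkey, h0, zero_add,
        if_pos hneg, if_neg (show ¬ (0:ℤ) < 0 by omega), Finset.mem_insert]
      constructor
      · intro _; left; trivial
      · intro _; exact ⟨by omega, by omega⟩
    | succ i =>
      rw [Finset.mem_insert]
      rw [hchar (i + 1) (by omega)]
      simp
end

section
/- Type 5 signed arc permutations (those of the form a shuffle of -k -(k-1) ... -1 with k+1, k+2, ..., n for some 1 ≤ k ≤ n-1) are in descent-preserving bijection with standard domino tableaux of two-row shapes (a, 2n-a) with a ≥ 2n-a ≥ 2; that is, there is a bijection φ between these sets with Des(π) = Des(φ(π)) for all such π, where Des of a domino tableau T is {i ≥ 1 : domino i+1 lies strictly below domino i} ∪ ({0} if the domino labeled 1 is vertical). -/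
/-- Cyclic successor on `{1,…,n}` (`n + 1 = 1`). -/
def csucc (n a : ℕ) : ℕ := if a = n then 1 else a + 1

/-- Cyclic predecessor on `{1,…,n}` (`1 - 1 = n`). -/
def cpred (n a : ℕ) : ℕ := if a = 1 then n else a - 1

/-- The set of absolute values `{|π(1)|,…,|π(i-1)|}`. -/
def prefixAbs (π : ℕ → ℤ) (i : ℕ) : Finset ℕ :=
  (Finset.Icc 1 (i - 1)).image (fun j => (π j).natAbs)

/-- `S` is a (cyclic) interval in `ℤ_n`, viewed inside `{1,…,n}`. -/
def IsCycInterval (n : ℕ) (S : Finset ℕ) : Prop :=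
  ∃ a m, a ∈ Finset.Icc 1 n ∧ m ≤ n ∧ S = (Finset.range m).image (fun j => (csucc n)^[j] a)

/-- Signed arc permutations. -/
def IsSignedArc (n : ℕ) (π : ℕ → ℤ) : Prop :=
  IsSignedPerm n π ∧ ∀ i ∈ Finset.Icc 1 n,
    IsCycInterval n (prefixAbs π i) ∧
    (cpred n (π i).natAbs ∈ prefixAbs π i → 0 < π i) ∧
    (csucc n (π i).natAbs ∈ prefixAbs π i → π i < 0)

/-- The word `π(1) π(2) … π(n)` of a signed permutation. -/
def toListP (n : ℕ) (π : ℕ → ℤ) : List ℤ := (List.range n).map (fun j => π (j + 1))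
/-- The cells of the Young diagram of a partition given as a list of row lengths. -/
def cellsOf (l : List ℕ) : Finset (ℕ × ℕ) :=
  (Finset.range l.length ×ˢ Finset.range (l.foldr max 0)).filter (fun p => p.2 < l.getD p.1 0)

/-- Two cells are adjacent (horizontally or vertically). -/
def Adjacent (c d : ℕ × ℕ) : Prop :=
  (c.1 = d.1 ∧ (c.2 + 1 = d.2 ∨ d.2 + 1 = c.2)) ∨ (c.2 = d.2 ∧ (c.1 + 1 = d.1 ∨ d.1 + 1 = c.1))

/-- A partition, as a weakly decreasing list of positive integers. -/
def IsPartitionList (l : List ℕ) : Prop := List.Pairwise (· ≥ ·) l ∧ ∀ x ∈ l, 0 < x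

/-- A standard domino tableau of shape `l ⊢ 2n`: a tiling of the diagram by dominoes
labelled bijectively with `1,…,n`, labels (weakly) increasing along rows and columns
(equal adjacent labels belong to the same domino). -/
def IsStdDominoTableau (n : ℕ) (l : List ℕ) (T : ℕ × ℕ → ℕ) : Prop :=
  IsPartitionList l ∧ l.sum = 2 * n ∧
  (∀ c, c ∉ cellsOf l → T c = 0) ∧
  (∀ c ∈ cellsOf l, T c ∈ Finset.Icc 1 n) ∧
  (∀ i ∈ Finset.Icc 1 n, ∃ c d, c ∈ cellsOf l ∧ d ∈ cellsOf l ∧ c ≠ d ∧ Adjacent c d ∧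
    (cellsOf l).filter (fun x => T x = i) = {c, d}) ∧
  (∀ r c, (r, c + 1) ∈ cellsOf l → T (r, c) ≤ T (r, c + 1)) ∧
  (∀ r c, (r + 1, c) ∈ cellsOf l → T (r, c) ≤ T (r + 1, c))

/-- The set of row indices occupied by the domino labelled `i`. -/
def rowsOf (l : List ℕ) (T : ℕ × ℕ → ℕ) (i : ℕ) : Finset ℕ :=
  ((cellsOf l).filter (fun c => T c = i)).image Prod.fst

/-- The lowest row occupied by the domino labelled `i`. -/
def maxRow (l : List ℕ) (T : ℕ × ℕ → ℕ) (i : ℕ) : ℕ := WithBot.unbotD 0 (rowsOf l T i).max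

/-- Descent set of a standard domino tableau: `i ≥ 1` with domino `i+1` strictly below
domino `i`, together with `0` when the domino labelled `1` is vertical. -/
def DominoDes (n : ℕ) (l : List ℕ) (T : ℕ × ℕ → ℕ) : Finset ℕ :=
  (Finset.range n).filter (fun i =>
    if i = 0 then (rowsOf l T 1).card = 2 else maxRow l T i < maxRow l T (i + 1))

/-- Type 5 signed arc permutations: shuffles of `-k -(k-1) … -1` with `k+1 … n`. -/
def Type5 (n : ℕ) (π : ℕ → ℤ) : Prop :=
  IsSignedPerm n π ∧ ∃ k, 1 ≤ k ∧ k ≤ n - 1 ∧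
    (toListP n π).filter (fun x => decide (x < 0)) =
      (List.range k).map (fun j => (j : ℤ) - k) ∧
    (toListP n π).filter (fun x => decide (0 < x)) =
      (List.range (n - k)).map (fun j => ((k : ℤ) + 1 + j))

namespace T5


/-- Row-1 length after inserting dominoes 1..i, where `S` is the set of "low" labels. -/
def qf (S : Finset ℕ) : ℕ → ℕ
  | 0 => 0
  | (i+1) => if (i+1) ∈ S then (if qf S i = i then i+1 else qf S i + 2) else qf S i

lemma qf_succ (S : Finset ℕ) (i : ℕ) :
    qf S (i+1) = if (i+1) ∈ S then (if qf S i = i then i+1 else qf S i + 2) else qf S i := rfl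

lemma qf_le (S : Finset ℕ) : ∀ i, qf S i ≤ i
  | 0 => le_refl 0
  | (i+1) => by
      have := qf_le S i
      rw [qf_succ]
      split_ifs <;> omega

/-- Row-0 length after inserting dominoes 1..i. -/
def pf (S : Finset ℕ) (i : ℕ) : ℕ := 2*i - qf S i

lemma pf_add_qf (S : Finset ℕ) (i : ℕ) : pf S i + qf S i = 2*i := by
  have := qf_le S i; unfold pf; omega

lemma qf_le_pf (S : Finset ℕ) (i : ℕ) : qf S i ≤ pf S i := by
  have h := qf_le S i; have := pf_add_qf S i; omega

lemma le_pf (S : Finset ℕ) (i : ℕ) : i ≤ pf S i := by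
  have h := qf_le S i; have := pf_add_qf S i; omega

lemma qf_mono (S : Finset ℕ) : Monotone (qf S) := by
  apply monotone_nat_of_le_succ
  intro i
  have := qf_le S i
  rw [qf_succ]; split_ifs <;> omega

lemma pf_mono (S : Finset ℕ) : Monotone (pf S) := by
  apply monotone_nat_of_le_succ
  intro i
  have h := qf_le S i
  have h2 : qf S (i+1) ≤ qf S i + 2 := by
    rw [qf_succ]; split_ifs <;> omega
  have := pf_add_qf S i; have := pf_add_qf S (i+1)
  omega

/-- Case: `i+1` high. -/
lemma qf_high (S : Finset ℕ) (i : ℕ) (h : (i+1) ∉ S) : qf S (i+1) = qf S i := by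
  rw [qf_succ]; simp [h]

/-- Case: `i+1` low, vertical. -/
lemma qf_vert (S : Finset ℕ) (i : ℕ) (h : (i+1) ∈ S) (hq : qf S i = i) :
    qf S (i+1) = i + 1 := by
  rw [qf_succ]; simp [h, hq]

/-- Case: `i+1` low, horizontal in row 1. -/
lemma qf_horiz (S : Finset ℕ) (i : ℕ) (h : (i+1) ∈ S) (hq : qf S i ≠ i) :
    qf S (i+1) = qf S i + 2 := by
  rw [qf_succ]; simp [h, hq]


lemma pf_high (S : Finset ℕ) (i : ℕ) (h : (i+1) ∉ S) : pf S (i+1) = pf S i + 2 := by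
  have h1 := qf_high S i h
  have := pf_add_qf S i; have := pf_add_qf S (i+1); omega

lemma pf_of_qf_eq (S : Finset ℕ) (i : ℕ) (hq : qf S i = i) : pf S i = i := by
  have := pf_add_qf S i; omega

lemma pf_vert (S : Finset ℕ) (i : ℕ) (h : (i+1) ∈ S) (hq : qf S i = i) :
    pf S (i+1) = i + 1 := by
  have h1 := qf_vert S i h hq
  have := pf_add_qf S (i+1); omega

lemma pf_horiz (S : Finset ℕ) (i : ℕ) (h : (i+1) ∈ S) (hq : qf S i ≠ i) :
    pf S (i+1) = pf S i := by
  have h1 := qf_horiz S i h hq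
  have := pf_add_qf S i; have := pf_add_qf S (i+1); omega

lemma exists_lt_pf (S : Finset ℕ) (c : ℕ) : ∃ i, c < pf S i :=
  ⟨c+1, lt_of_lt_of_le (Nat.lt_succ_self c) (le_pf S (c+1))⟩

/-- Label of cell `(0,c)` in the tableau of `S`. -/
def lab0 (S : Finset ℕ) (c : ℕ) : ℕ := Nat.find (exists_lt_pf S c)

open Classical in
/-- Label of cell `(1,c)` in the tableau of `S`. -/
noncomputable def lab1 (S : Finset ℕ) (c : ℕ) : ℕ :=
  if h : ∃ i, c < qf S i then Nat.find h else 0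

lemma lab0_le_iff (S : Finset ℕ) (c i : ℕ) : lab0 S c ≤ i ↔ c < pf S i := by
  constructor
  · intro h
    exact lt_of_lt_of_le (Nat.find_spec (exists_lt_pf S c)) (pf_mono S h)
  · intro h
    exact Nat.find_le h

lemma lab1_le_iff (S : Finset ℕ) (c i : ℕ) (hc : ∃ j, c < qf S j) :
    lab1 S c ≤ i ↔ c < qf S i := by
  rw [lab1, dif_pos hc]
  constructor
  · intro h
    exact lt_of_lt_of_le (Nat.find_spec hc) (qf_mono S h)
  · intro h
    exact Nat.find_le h

lemma lab0_eq_iff (S : Finset ℕ) (c i : ℕ) :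
    lab0 S c = i + 1 ↔ pf S i ≤ c ∧ c < pf S (i+1) := by
  constructor
  · intro h
    have h1 : lab0 S c ≤ i + 1 := h.le
    have h2 : ¬ lab0 S c ≤ i := by omega
    rw [lab0_le_iff] at h1 h2; omega
  · intro ⟨h1, h2⟩
    have ha : lab0 S c ≤ i + 1 := (lab0_le_iff S c (i+1)).2 h2
    have hb : ¬ lab0 S c ≤ i := by rw [lab0_le_iff]; omega
    omega

lemma lab1_eq_iff (S : Finset ℕ) (c i : ℕ) (hc : ∃ j, c < qf S j) :
    lab1 S c = i + 1 ↔ qf S i ≤ c ∧ c < qf S (i+1) := by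
  constructor
  · intro h
    have h1 : lab1 S c ≤ i + 1 := h.le
    have h2 : ¬ lab1 S c ≤ i := by omega
    rw [lab1_le_iff S c _ hc] at h1 h2; omega
  · intro ⟨h1, h2⟩
    have ha : lab1 S c ≤ i + 1 := (lab1_le_iff S c (i+1) hc).2 h2
    have hb : ¬ lab1 S c ≤ i := by rw [lab1_le_iff S c i hc]; omega
    omega

/-- The standard domino tableau associated to a set `S` of low labels. -/
noncomputable def TS (n : ℕ) (S : Finset ℕ) : ℕ × ℕ → ℕ := fun x =>
  if x.1 = 0 ∧ x.2 < pf S n then lab0 S x.2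
  else if x.1 = 1 ∧ x.2 < qf S n then lab1 S x.2
  else 0

lemma mem_cellsOf_pair {a b : ℕ} (hba : b ≤ a) (x : ℕ × ℕ) :
    x ∈ cellsOf [a, b] ↔ (x.1 = 0 ∧ x.2 < a) ∨ (x.1 = 1 ∧ x.2 < b) := by
  have hmax : [a, b].foldr max 0 = a := by
    simp [List.foldr]; omega
  simp only [cellsOf, Finset.mem_filter, Finset.mem_product, Finset.mem_range,
    List.length_cons, List.length_nil, hmax]
  constructor
  · rintro ⟨⟨h1, h2⟩, h3⟩
    interval_cases h : x.1
    · left; exact ⟨rfl, by simpa using h3⟩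
    · right; exact ⟨rfl, by simpa using h3⟩
  · rintro (⟨h1, h2⟩ | ⟨h1, h2⟩)
    · exact ⟨⟨by omega, by omega⟩, by simp [h1]; omega⟩
    · exact ⟨⟨by omega, by omega⟩, by simp [h1]; omega⟩

lemma lab0_spec (S : Finset ℕ) (c : ℕ) : c < pf S (lab0 S c) := by
  unfold lab0; exact Nat.find_spec (exists_lt_pf S c)

lemma lab1_spec (S : Finset ℕ) (c : ℕ) (hc : ∃ j, c < qf S j) : c < qf S (lab1 S c) := by
  rw [lab1, dif_pos hc]; exact Nat.find_spec hc

lemma lab0_pos (S : Finset ℕ) (c : ℕ) : 1 ≤ lab0 S c := by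
  by_contra h
  have : lab0 S c ≤ 0 := by omega
  rw [lab0_le_iff] at this
  simp [pf, qf] at this

lemma lab1_pos (S : Finset ℕ) (c : ℕ) (hc : ∃ j, c < qf S j) : 1 ≤ lab1 S c := by
  by_contra h
  have : lab1 S c ≤ 0 := by omega
  rw [lab1_le_iff S c 0 hc] at this
  simp [qf] at this

lemma TS_row0 (n : ℕ) (S : Finset ℕ) (c : ℕ) (h : c < pf S n) :
    TS n S (0, c) = lab0 S c := by simp [TS, h]

lemma TS_row1 (n : ℕ) (S : Finset ℕ) (c : ℕ) (h : c < qf S n) :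
    TS n S (1, c) = lab1 S c := by simp [TS, h]

/-- Description of the fiber of label `j+1` in the tableau `TS n S`. -/
lemma fiber_eq (n : ℕ) (S : Finset ℕ) (j : ℕ) (hj : j + 1 ≤ n) :
    (cellsOf [pf S n, qf S n]).filter (fun x => TS n S x = j+1) =
      if (j+1) ∈ S then
        (if qf S j = j then ({((0:ℕ),j), (1,j)} : Finset (ℕ × ℕ))
         else {(1, qf S j), (1, qf S j + 1)})
      else {(0, pf S j), (0, pf S j + 1)} := by
  have hmono_p : pf S (j+1) ≤ pf S n := pf_mono S hj
  have hmono_q : qf S (j+1) ≤ qf S n := qf_mono S hj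
  have key : ∀ r c : ℕ, (((r = 0 ∧ c < pf S n) ∨ (r = 1 ∧ c < qf S n)) ∧ TS n S (r,c) = j+1)
      ↔ ((r = 0 ∧ pf S j ≤ c ∧ c < pf S (j+1)) ∨ (r = 1 ∧ qf S j ≤ c ∧ c < qf S (j+1))) := by
    intro r c
    constructor
    · rintro ⟨(⟨rfl, hc⟩ | ⟨rfl, hc⟩), hT⟩
      · rw [TS_row0 n S c hc, lab0_eq_iff] at hT
        left; exact ⟨rfl, hT⟩
      · rw [TS_row1 n S c hc, lab1_eq_iff S c j ⟨n, hc⟩] at hT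
        right; exact ⟨rfl, hT⟩
    · rintro (⟨rfl, h1, h2⟩ | ⟨rfl, h1, h2⟩)
      · have hc : c < pf S n := by omega
        rw [TS_row0 n S c hc, lab0_eq_iff]
        exact ⟨Or.inl ⟨rfl, hc⟩, h1, h2⟩
      · have hc : c < qf S n := by omega
        rw [TS_row1 n S c hc, lab1_eq_iff S c j ⟨n, hc⟩]
        exact ⟨Or.inr ⟨rfl, hc⟩, h1, h2⟩
  ext ⟨r, c⟩
  rw [Finset.mem_filter, mem_cellsOf_pair (qf_le_pf S n), key r c]
  by_cases hS : (j+1) ∈ S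
  · by_cases hq : qf S j = j
    · have hp0 := pf_of_qf_eq S j hq
      have hp1 := pf_vert S j hS hq
      have hq1 := qf_vert S j hS hq
      rw [if_pos hS, if_pos hq]
      simp only [Finset.mem_insert, Finset.mem_singleton, Prod.mk.injEq]
      omega
    · have hp1 := pf_horiz S j hS hq
      have hq1 := qf_horiz S j hS hq
      have := qf_le S j
      rw [if_pos hS, if_neg hq]
      simp only [Finset.mem_insert, Finset.mem_singleton, Prod.mk.injEq]
      omega
  · have hp1 := pf_high S j hS
    have hq1 := qf_high S j hS
    rw [if_neg hS]
    simp only [Finset.mem_insert, Finset.mem_singleton, Prod.mk.injEq]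
    omega

lemma TS_std (n : ℕ) (S : Finset ℕ) (hS2 : 2 ≤ qf S n) :
    IsStdDominoTableau n [pf S n, qf S n] (TS n S) := by
  have hba : qf S n ≤ pf S n := qf_le_pf S n
  refine ⟨⟨?_, ?_⟩, ?_, ?_, ?_, ?_, ?_, ?_⟩
  · simp [List.pairwise_cons]; omega
  · intro x hx
    simp at hx
    rcases hx with rfl | rfl <;> omega
  · simp [pf_add_qf S n]
  · intro c hc
    rw [mem_cellsOf_pair hba] at hc
    rw [TS]
    split_ifs with h1 h2
    · exact absurd (Or.inl h1) hc
    · exact absurd (Or.inr h2) hc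
    · rfl
  · intro c hc
    rw [mem_cellsOf_pair hba] at hc
    rw [Finset.mem_Icc]
    rcases hc with ⟨h1, h2⟩ | ⟨h1, h2⟩
    · obtain ⟨r, cc⟩ := c
      simp only at h1 h2
      subst h1
      rw [TS_row0 n S cc h2]
      exact ⟨lab0_pos S cc, (lab0_le_iff S cc n).2 h2⟩
    · obtain ⟨r, cc⟩ := c
      simp only at h1 h2
      subst h1
      rw [TS_row1 n S cc h2]
      exact ⟨lab1_pos S cc ⟨n, h2⟩, (lab1_le_iff S cc n ⟨n, h2⟩).2 h2⟩
  · intro i hi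
    rw [Finset.mem_Icc] at hi
    obtain ⟨j, rfl⟩ : ∃ j, i = j + 1 := ⟨i - 1, by omega⟩
    have hj : j + 1 ≤ n := hi.2
    have hmono_p : pf S (j+1) ≤ pf S n := pf_mono S hj
    have hmono_q : qf S (j+1) ≤ qf S n := qf_mono S hj
    rw [fiber_eq n S j hj]
    by_cases hS : (j+1) ∈ S
    · by_cases hq : qf S j = j
      · have hp0 := pf_of_qf_eq S j hq
        have hp1 := pf_vert S j hS hq
        have hq1 := qf_vert S j hS hq
        refine ⟨(0, j), (1, j), ?_, ?_, by simp, ?_, by rw [if_pos hS, if_pos hq]⟩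
        · rw [mem_cellsOf_pair hba]; left; exact ⟨rfl, by omega⟩
        · rw [mem_cellsOf_pair hba]; right; exact ⟨rfl, by omega⟩
        · right; exact ⟨rfl, Or.inl rfl⟩
      · have hp1 := pf_horiz S j hS hq
        have hq1 := qf_horiz S j hS hq
        refine ⟨(1, qf S j), (1, qf S j + 1), ?_, ?_, by simp, ?_, by rw [if_pos hS, if_neg hq]⟩
        · rw [mem_cellsOf_pair hba]; right; exact ⟨rfl, by omega⟩
        · rw [mem_cellsOf_pair hba]; right; exact ⟨rfl, by omega⟩
        · left; exact ⟨rfl, Or.inl rfl⟩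
    · have hp1 := pf_high S j hS
      have hq1 := qf_high S j hS
      refine ⟨(0, pf S j), (0, pf S j + 1), ?_, ?_, by simp, ?_, by rw [if_neg hS]⟩
      · rw [mem_cellsOf_pair hba]; left; exact ⟨rfl, by omega⟩
      · rw [mem_cellsOf_pair hba]; left; exact ⟨rfl, by omega⟩
      · left; exact ⟨rfl, Or.inl rfl⟩
  · intro r c hc
    rw [mem_cellsOf_pair hba] at hc
    rcases hc with ⟨h1, h2⟩ | ⟨h1, h2⟩
    · simp only at h1 h2; subst h1
      rw [TS_row0 n S c (by omega), TS_row0 n S (c+1) h2]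
      rw [lab0_le_iff]
      have := lab0_spec S (c+1); omega
    · simp only at h1 h2; subst h1
      rw [TS_row1 n S c (by omega), TS_row1 n S (c+1) h2]
      rw [lab1_le_iff S c _ ⟨n, by omega⟩]
      have := lab1_spec S (c+1) ⟨n, h2⟩; omega
  · intro r c hc
    rw [mem_cellsOf_pair hba] at hc
    rcases hc with ⟨h1, h2⟩ | ⟨h1, h2⟩
    · simp only at h1 h2; omega
    · simp only at h1 h2
      have hr : r = 0 := by omega
      subst hr
      rw [TS_row1 n S c h2, TS_row0 n S c (by omega)]
      rw [lab0_le_iff]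
      have h3 := lab1_spec S c ⟨n, h2⟩
      have h4 := qf_le_pf S (lab1 S c)
      omega

/-- The common descent-set formula. -/
def desSetOf (n : ℕ) (S : Finset ℕ) : Finset ℕ :=
  (Finset.range n).filter (fun i => if i = 0 then 1 ∈ S else (i ∉ S ∧ (i+1) ∈ S))

lemma rowsOf_TS (n : ℕ) (S : Finset ℕ) (j : ℕ) (hj : j + 1 ≤ n) :
    rowsOf [pf S n, qf S n] (TS n S) (j+1) =
      if (j+1) ∈ S then (if qf S j = j then {0, 1} else {1}) else {0} := by
  rw [rowsOf, fiber_eq n S j hj]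
  split_ifs <;> simp

lemma maxRow_TS (n : ℕ) (S : Finset ℕ) (j : ℕ) (hj : j + 1 ≤ n) :
    maxRow [pf S n, qf S n] (TS n S) (j+1) = if (j+1) ∈ S then 1 else 0 := by
  rw [maxRow, rowsOf_TS n S j hj]
  split_ifs with h1 h2 <;> rfl

lemma DominoDes_TS (n : ℕ) (S : Finset ℕ) :
    DominoDes n [pf S n, qf S n] (TS n S) = desSetOf n S := by
  ext i
  simp only [DominoDes, desSetOf, Finset.mem_filter, Finset.mem_range]
  refine and_congr_right fun hi => ?_
  by_cases h0 : i = 0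
  · subst h0
    simp only [if_pos rfl]
    have e1 := rowsOf_TS n S 0 (by omega : 0+1 ≤ n)
    norm_num at e1
    rw [e1, show qf S 0 = 0 from rfl]
    by_cases h : 1 ∈ S <;> simp [h]
  · rw [if_neg h0, if_neg h0]
    obtain ⟨j, rfl⟩ : ∃ j, i = j + 1 := ⟨i - 1, by omega⟩
    rw [maxRow_TS n S j (by omega), maxRow_TS n S (j+1) (by omega)]
    by_cases ha : (j+1) ∈ S <;> by_cases hb : (j+1+1) ∈ S <;> simp [ha, hb]

lemma qf_pos_of_mem (S : Finset ℕ) {j : ℕ} (hj : j ∈ S) (hj1 : 1 ≤ j) {i : ℕ} (hji : j ≤ i) :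
    1 ≤ qf S i := by
  have h1 : 1 ≤ qf S j := by
    obtain ⟨m, rfl⟩ : ∃ m, j = m + 1 := ⟨j - 1, by omega⟩
    rw [qf_succ]
    rw [if_pos hj]
    split_ifs <;> omega
  exact le_trans h1 (qf_mono S hji)

lemma two_le_qf (n : ℕ) (S : Finset ℕ) (hS : S ⊆ Finset.Icc 1 n) (h1 : S.Nonempty)
    (h2 : S ≠ {1}) : 2 ≤ qf S n := by
  obtain ⟨j, hj⟩ := h1
  have hj' := Finset.mem_Icc.1 (hS hj)
  -- find an element ≥ 2
  obtain ⟨m, hm, hm2⟩ : ∃ m ∈ S, 2 ≤ m := by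
    by_cases hj2 : 2 ≤ j
    · exact ⟨j, hj, hj2⟩
    · have hj1 : j = 1 := by omega
      subst hj1
      by_contra hc
      push_neg at hc
      apply h2
      ext x
      simp only [Finset.mem_singleton]
      constructor
      · intro hx
        have := hc x hx
        have := Finset.mem_Icc.1 (hS hx)
        omega
      · rintro rfl; exact hj
  have hmn := Finset.mem_Icc.1 (hS hm)
  have key : 2 ≤ qf S m := by
    obtain ⟨t, rfl⟩ : ∃ t, m = t + 1 := ⟨m - 1, by omega⟩
    rw [qf_succ, if_pos hm]
    split_ifs <;> omega
  exact le_trans key (qf_mono S hmn.2)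

lemma qf_singleton_one : ∀ i : ℕ, 1 ≤ i → qf ({1} : Finset ℕ) i = 1
  | 0 => by omega
  | (i+1) => fun _ => by
      rcases Nat.eq_zero_or_pos i with rfl | hi
      · rfl
      · rw [qf_succ]
        have h1 : (i+1) ∉ ({1} : Finset ℕ) := by simp; omega
        rw [if_neg h1, qf_singleton_one i hi]

/-- Membership in `S` is recoverable from the tableau `TS n S`. -/
lemma mem_iff_row1 (n : ℕ) (S : Finset ℕ) (hS : S ⊆ Finset.Icc 1 n) (j : ℕ) (hj : j + 1 ≤ n) :
    (j+1) ∈ S ↔ ∃ c, TS n S (1, c) = j + 1 := by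
  constructor
  · intro h
    refine ⟨qf S j, ?_⟩
    have hlt : qf S j < qf S (j+1) := by
      rw [qf_succ, if_pos h]; split_ifs <;> omega
    have hn : qf S j < qf S n := lt_of_lt_of_le hlt (qf_mono S hj)
    rw [TS_row1 n S _ hn, lab1_eq_iff S _ j ⟨n, hn⟩]
    omega
  · rintro ⟨c, hc⟩
    by_cases hcn : c < qf S n
    · rw [TS_row1 n S c hcn, lab1_eq_iff S c j ⟨n, hcn⟩] at hc
      by_contra h
      rw [qf_high S j h] at hc
      omega
    · rw [TS, if_neg (by simp), if_neg (by simp [hcn])] at hc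
      omega

lemma TS_inj (n : ℕ) (S S' : Finset ℕ) (hS : S ⊆ Finset.Icc 1 n) (hS' : S' ⊆ Finset.Icc 1 n)
    (h : TS n S = TS n S') : S = S' := by
  ext i
  constructor
  · intro hi
    have hii := Finset.mem_Icc.1 (hS hi)
    obtain ⟨j, rfl⟩ : ∃ j, i = j + 1 := ⟨i - 1, by omega⟩
    rw [mem_iff_row1 n S' hS' j hii.2, ← h, ← mem_iff_row1 n S hS j hii.2]
    exact hi
  · intro hi
    have hii := Finset.mem_Icc.1 (hS' hi)
    obtain ⟨j, rfl⟩ : ∃ j, i = j + 1 := ⟨i - 1, by omega⟩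
    rw [mem_iff_row1 n S hS j hii.2, h, ← mem_iff_row1 n S' hS' j hii.2]
    exact hi

/-- The twist exchanging `{1}` with the full set. -/
def sig (n : ℕ) (S : Finset ℕ) : Finset ℕ := if S = {1} then Finset.Icc 1 n else S

lemma desSetOf_sig (n : ℕ) (S : Finset ℕ) (hn : 1 ≤ n) : desSetOf n (sig n S) = desSetOf n S := by
  rw [sig]
  split_ifs with h
  · subst h
    unfold desSetOf
    apply Finset.filter_congr
    intro i hi
    rw [Finset.mem_range] at hi
    by_cases h0 : i = 0
    · simp [h0, Finset.mem_Icc, hn]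
    · simp only [if_neg h0, Finset.mem_Icc, Finset.mem_singleton]
      constructor
      · rintro ⟨h1, h2⟩; omega
      · rintro ⟨h1, h2⟩; omega
  · rfl

/-- Number of elements of `S` that are `≤ i`. -/
def lo (S : Finset ℕ) (i : ℕ) : ℕ := (S.filter (· ≤ i)).card

lemma lo_succ (S : Finset ℕ) (i : ℕ) :
    lo S (i+1) = if (i+1) ∈ S then lo S i + 1 else lo S i := by
  unfold lo
  have hsplit : S.filter (· ≤ i+1) = (S.filter (· ≤ i)) ∪ (S.filter (· = i+1)) := by
    rw [← Finset.filter_or]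
    apply Finset.filter_congr
    intro x _
    constructor
    · intro h; omega
    · intro h; omega
  rw [hsplit, Finset.card_union_of_disjoint]
  · rw [Finset.filter_eq']
    split_ifs <;> simp
  · rw [Finset.disjoint_left]
    intro x hx hx'
    rw [Finset.mem_filter] at hx hx'
    omega

lemma lo_zero {n : ℕ} (S : Finset ℕ) (hS : S ⊆ Finset.Icc 1 n) : lo S 0 = 0 := by
  unfold lo
  rw [Finset.card_eq_zero, Finset.filter_eq_empty_iff]
  intro x hx
  have := Finset.mem_Icc.1 (hS hx)
  omega

lemma lo_mono (S : Finset ℕ) : Monotone (lo S) := by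
  apply monotone_nat_of_le_succ
  intro i
  rw [lo_succ]
  split_ifs <;> omega

lemma lo_le_card (S : Finset ℕ) (i : ℕ) : lo S i ≤ S.card :=
  Finset.card_le_card (Finset.filter_subset _ _)

lemma lo_eq_card {n : ℕ} (S : Finset ℕ) (hS : S ⊆ Finset.Icc 1 n) : lo S n = S.card := by
  unfold lo
  congr 1
  apply Finset.filter_true_of_mem
  intro x hx
  exact (Finset.mem_Icc.1 (hS hx)).2

lemma lo_le {n : ℕ} (S : Finset ℕ) (hS : S ⊆ Finset.Icc 1 n) (i : ℕ) : lo S i ≤ i := by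
  induction i with
  | zero => rw [lo_zero S hS]
  | succ i ih => rw [lo_succ]; split_ifs <;> omega

lemma lo_pos_of_mem (S : Finset ℕ) {i : ℕ} (h : i ∈ S) : 1 ≤ lo S i := by
  unfold lo
  rw [Nat.succ_le_iff, Finset.card_pos]
  exact ⟨i, Finset.mem_filter.2 ⟨h, le_refl i⟩⟩

lemma lo_sub_of_not_mem {n : ℕ} (S : Finset ℕ) (hS : S ⊆ Finset.Icc 1 n) {i : ℕ}
    (hi : 1 ≤ i) (h : i ∉ S) : lo S i ≤ i - 1 := by
  obtain ⟨j, rfl⟩ : ∃ j, i = j + 1 := ⟨i - 1, by omega⟩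
  rw [lo_succ, if_neg h]
  have := lo_le S hS j
  omega

lemma hi_mono {n : ℕ} (S : Finset ℕ) (hS : S ⊆ Finset.Icc 1 n) :
    Monotone (fun i => i - lo S i) := by
  apply monotone_nat_of_le_succ
  intro i
  show i - lo S i ≤ (i+1) - lo S (i+1)
  have h1 := lo_le S hS i
  rw [lo_succ]
  split_ifs <;> omega

/-- The type-5 signed permutation associated to a set `S` of "negative positions". -/
def piS (n : ℕ) (S : Finset ℕ) : ℕ → ℤ := fun i =>
  if 1 ≤ i ∧ i ≤ n then
    (if i ∈ S then (lo S i : ℤ) - 1 - (S.card : ℤ) else (S.card : ℤ) + ((i - lo S i : ℕ) : ℤ))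
  else 0

lemma piS_mem {n : ℕ} {S : Finset ℕ} {i : ℕ} (h1 : 1 ≤ i) (h2 : i ≤ n) (h : i ∈ S) :
    piS n S i = (lo S i : ℤ) - 1 - (S.card : ℤ) := by
  rw [piS, if_pos ⟨h1, h2⟩, if_pos h]

lemma piS_not_mem {n : ℕ} {S : Finset ℕ} {i : ℕ} (h1 : 1 ≤ i) (h2 : i ≤ n) (h : i ∉ S) :
    piS n S i = (S.card : ℤ) + ((i - lo S i : ℕ) : ℤ) := by
  rw [piS, if_pos ⟨h1, h2⟩, if_neg h]

lemma piS_neg {n : ℕ} {S : Finset ℕ} {i : ℕ} (h1 : 1 ≤ i) (h2 : i ≤ n) (h : i ∈ S) :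
    piS n S i < 0 := by
  rw [piS_mem h1 h2 h]
  have := lo_le_card S i
  omega

lemma piS_pos {n : ℕ} {S : Finset ℕ} (hS : S ⊆ Finset.Icc 1 n) {i : ℕ} (h1 : 1 ≤ i)
    (h2 : i ≤ n) (h : i ∉ S) : 0 < piS n S i := by
  rw [piS_not_mem h1 h2 h]
  have hll := lo_le S hS i
  have hlc := lo_le_card S i
  rw [Nat.cast_sub hll]
  omega

lemma DesSet_piS (n : ℕ) (S : Finset ℕ) (hS : S ⊆ Finset.Icc 1 n) :
    DesSet n (piS n S) = desSetOf n S := by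
  unfold DesSet desSetOf
  apply Finset.filter_congr
  intro i hi
  rw [Finset.mem_range] at hi
  by_cases h0 : i = 0
  · subst h0
    rw [if_pos rfl]
    have : piS n S 0 = 0 := by rw [piS]; norm_num
    rw [this]
    constructor
    · intro h
      rw [show (0:ℕ)+1 = 1 from rfl] at h
      by_contra hm
      have := piS_pos hS (le_refl 1) (by omega) hm
      omega
    · intro h
      rw [show (0:ℕ)+1 = 1 from rfl]
      norm_num
      exact piS_neg (le_refl 1) (by omega) h
  · rw [if_neg h0]
    have hi1 : 1 ≤ i := by omega
    have hin : i ≤ n := by omega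
    have hin' : i + 1 ≤ n := by omega
    have hls := lo_succ S i
    have hlc := lo_le_card S i
    have hlc' := lo_le_card S (i+1)
    have hll := lo_le S hS i
    by_cases ha : i ∈ S <;> by_cases hb : (i+1) ∈ S
    · rw [piS_mem hi1 hin ha, piS_mem (by omega) hin' hb]
      rw [if_pos hb] at hls
      constructor
      · intro h; omega
      · rintro ⟨h, -⟩; exact absurd ha h
    · rw [piS_mem hi1 hin ha, piS_not_mem (by omega) hin' hb]
      constructor
      · intro h; omega
      · rintro ⟨h, -⟩; exact absurd ha h
    · rw [piS_not_mem hi1 hin ha, piS_mem (by omega) hin' hb]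
      constructor
      · intro h; exact ⟨ha, hb⟩
      · intro h; omega
    · rw [piS_not_mem hi1 hin ha, piS_not_mem (by omega) hin' hb]
      rw [if_neg hb] at hls
      constructor
      · intro h
        rw [hls] at h
        omega
      · rintro ⟨-, h⟩; exact absurd h hb

lemma filters_piS (n : ℕ) (S : Finset ℕ) (hS : S ⊆ Finset.Icc 1 n) :
    ∀ t, t ≤ n →
    ((List.range t).map (fun j => piS n S (j+1))).filter (fun x => decide (x < 0)) =
      (List.range (lo S t)).map (fun (j : ℕ) => (j : ℤ) - (S.card : ℤ)) ∧
    ((List.range t).map (fun j => piS n S (j+1))).filter (fun x => decide (0 < x)) =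
      (List.range (t - lo S t)).map (fun (j : ℕ) => ((S.card : ℤ) + 1 + (j : ℤ))) := by
  intro t
  induction t with
  | zero => intro _; rw [lo_zero S hS]; simp
  | succ t ih =>
    intro ht
    obtain ⟨ih1, ih2⟩ := ih (by omega)
    have hll := lo_le S hS t
    rw [List.range_succ, List.map_append, List.filter_append, List.filter_append, ih1, ih2]
    by_cases hm : (t+1) ∈ S
    · have hv := piS_mem (by omega) ht hm
      have hneg : piS n S (t+1) < 0 := piS_neg (by omega) ht hm
      have hls := lo_succ S t
      rw [if_pos hm] at hls
      constructor
      · rw [hls, List.range_succ, List.map_append]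
        congr 1
        simp only [List.map_cons, List.map_nil, List.filter_cons]
        rw [if_pos (by simpa using hneg)]
        simp only [List.filter_nil, List.cons.injEq, and_true]
        rw [hv, hls]
        push_cast
        ring
      · rw [hls]
        simp only [List.map_cons, List.map_nil, List.filter_cons]
        rw [if_neg (by simp; omega)]
        rw [show t + 1 - (lo S t + 1) = t - lo S t from by omega]
        simp
    · have hv := piS_not_mem (by omega) ht hm
      have hpos : 0 < piS n S (t+1) := piS_pos hS (by omega) ht hm
      have hls := lo_succ S t
      rw [if_neg hm] at hls
      constructor
      · rw [hls]
        simp only [List.map_cons, List.map_nil, List.filter_cons]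
        rw [if_neg (by simp; omega)]
        simp
      · rw [hls, show t + 1 - lo S t = (t - lo S t) + 1 from by omega, List.range_succ,
          List.map_append]
        congr 1
        simp only [List.map_cons, List.map_nil, List.filter_cons]
        rw [if_pos (by simpa using hpos)]
        simp only [List.filter_nil, List.cons.injEq, and_true]
        rw [hv, hls, Nat.cast_sub hll]
        push_cast [show lo S t ≤ t + 1 from by omega]
        ring

/-- Two integer lists of nonzero entries with the same sign pattern and the same
positive and negative subsequences are equal. -/
lemma list_recon : ∀ (L M : List ℤ), (∀ x ∈ L, x ≠ 0) → (∀ x ∈ M, x ≠ 0) →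
    L.length = M.length →
    (∀ (i : ℕ) (h1 : i < L.length) (h2 : i < M.length), (L.get ⟨i, h1⟩ < 0 ↔ M.get ⟨i, h2⟩ < 0)) →
    L.filter (fun x => decide (x < 0)) = M.filter (fun x => decide (x < 0)) →
    L.filter (fun x => decide (0 < x)) = M.filter (fun x => decide (0 < x)) →
    L = M := by
  intro L
  induction L with
  | nil =>
    intro M _ _ hlen _ _ _
    cases M with
    | nil => rfl
    | cons b M => simp at hlen
  | cons a L ih =>
    intro M hL hM hlen hmask hneg hpos
    cases M with
    | nil => simp at hlen
    | cons b M =>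
      have ha0 : a ≠ 0 := hL a (by simp)
      have hb0 : b ≠ 0 := hM b (by simp)
      have hab : a < 0 ↔ b < 0 := hmask 0 (by simp) (by simp)
      have htail : L = M := by
        apply ih M (fun x hx => hL x (by simp [hx])) (fun x hx => hM x (by simp [hx]))
          (by simpa using hlen)
        · intro i h1 h2
          exact hmask (i+1) (by simpa using Nat.succ_lt_succ h1) (by simpa using Nat.succ_lt_succ h2)
        · by_cases ha : a < 0
          · have hb : b < 0 := hab.1 ha
            rw [List.filter_cons, List.filter_cons, if_pos (by simpa using ha),
              if_pos (by simpa using hb)] at hneg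
            exact (List.cons.injEq _ _ _ _ ▸ hneg).2
          · have hb : ¬ b < 0 := fun h => ha (hab.2 h)
            rw [List.filter_cons, List.filter_cons, if_neg (by simpa using ha),
              if_neg (by simpa using hb)] at hneg
            exact hneg
        · by_cases ha : a < 0
          · have hb : b < 0 := hab.1 ha
            rw [List.filter_cons, List.filter_cons, if_neg (by simp; omega),
              if_neg (by simp; omega)] at hpos
            exact hpos
          · have hb : ¬ b < 0 := fun h => ha (hab.2 h)
            rw [List.filter_cons, List.filter_cons, if_pos (by simp; omega),
              if_pos (by simp; omega)] at hpos
            exact (List.cons.injEq _ _ _ _ ▸ hpos).2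
      have hhead : a = b := by
        by_cases ha : a < 0
        · have hb : b < 0 := hab.1 ha
          rw [List.filter_cons, List.filter_cons, if_pos (by simpa using ha),
            if_pos (by simpa using hb)] at hneg
          exact (List.cons.injEq _ _ _ _ ▸ hneg).1
        · have hb : ¬ b < 0 := fun h => ha (hab.2 h)
          rw [List.filter_cons, List.filter_cons, if_pos (by simp; omega),
            if_pos (by simp; omega)] at hpos
          exact (List.cons.injEq _ _ _ _ ▸ hpos).1
      rw [hhead, htail]

/-- Lists with the same sign pattern have negative parts of the same length. -/
lemma mask_count : ∀ (L M : List ℤ), L.length = M.length →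
    (∀ (i : ℕ) (h1 : i < L.length) (h2 : i < M.length), (L.get ⟨i, h1⟩ < 0 ↔ M.get ⟨i, h2⟩ < 0)) →
    (L.filter (fun x => decide (x < 0))).length = (M.filter (fun x => decide (x < 0))).length := by
  intro L
  induction L with
  | nil =>
    intro M hlen _
    cases M with
    | nil => rfl
    | cons b M => simp at hlen
  | cons a L ih =>
    intro M hlen hmask
    cases M with
    | nil => simp at hlen
    | cons b M =>
      have hab : a < 0 ↔ b < 0 := hmask 0 (by simp) (by simp)
      have htail := ih M (by simpa using hlen)
        (fun i h1 h2 => hmask (i+1) (by simpa using Nat.succ_lt_succ h1)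
          (by simpa using Nat.succ_lt_succ h2))
      rw [List.filter_cons, List.filter_cons]
      by_cases ha : a < 0
      · rw [if_pos (by simpa using ha), if_pos (by simpa using hab.1 ha)]
        simpa using htail
      · rw [if_neg (by simpa using ha), if_neg (by simpa using fun h => ha (hab.2 h))]
        exact htail

lemma bridge (l : List ℕ) (f : ℤ → ℤ) :
    (List.map f (do let a ← l; pure ((a:ℤ)))) = l.map (fun (a : ℕ) => f (a:ℤ)) := by
  induction l with
  | nil => rfl
  | cons x l ih =>
    show List.map f ((x :: l).flatMap fun a => [((a:ℕ):ℤ)]) = _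
    rw [List.flatMap_cons]
    simp only [List.map_append, List.map_cons, List.map_nil]
    rw [show (l.flatMap fun a => [((a:ℕ):ℤ)]) = (do let a ← l; pure ((a:ℤ))) from rfl, ih]
    rfl

lemma card_Icc_one (n : ℕ) : (Finset.Icc 1 n).card = n := by
  rw [Nat.card_Icc]; omega

lemma lo_lt_of_mem (S : Finset ℕ) {i j : ℕ} (hij : i < j) (hj : j ∈ S) :
    lo S i < lo S j := by
  obtain ⟨m, rfl⟩ : ∃ m, j = m + 1 := ⟨j - 1, by omega⟩
  rw [lo_succ, if_pos hj]
  have := lo_mono S (show i ≤ m by omega)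
  omega

lemma hi_lt_of_not_mem {n : ℕ} (S : Finset ℕ) (hS : S ⊆ Finset.Icc 1 n) {i j : ℕ}
    (hij : i < j) (hj : j ∉ S) : i - lo S i < j - lo S j := by
  obtain ⟨m, rfl⟩ : ∃ m, j = m + 1 := ⟨j - 1, by omega⟩
  rw [lo_succ, if_neg hj]
  have h1 := hi_mono S hS (show i ≤ m by omega)
  have h2 := lo_le S hS m
  simp only at h1
  omega

lemma piS_signedPerm (n : ℕ) (S : Finset ℕ) (hS : S ⊆ Finset.Icc 1 n) :
    IsSignedPerm n (piS n S) := by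
  have hcard : S.card ≤ n := by
    have := Finset.card_le_card hS
    rwa [card_Icc_one] at this
  refine ⟨by rw [piS]; norm_num, fun i hi => by rw [piS, if_neg (by omega)], ?_, ?_⟩
  · intro i hi
    rw [Finset.mem_Icc] at hi
    by_cases hm : i ∈ S
    · rw [piS_mem hi.1 hi.2 hm]
      have l1 := lo_pos_of_mem S hm
      have l2 := lo_le_card S i
      omega
    · rw [piS_not_mem hi.1 hi.2 hm]
      have l1 := lo_sub_of_not_mem S hS hi.1 hm
      have l2 := lo_le S hS i
      have l3 : i - lo S i ≤ n - lo S n := hi_mono S hS hi.2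
      rw [lo_eq_card S hS] at l3
      omega
  · intro i hi j hj heq
    rw [Finset.mem_Icc] at hi hj
    by_cases hmi : i ∈ S <;> by_cases hmj : j ∈ S
    · rw [piS_mem hi.1 hi.2 hmi, piS_mem hj.1 hj.2 hmj] at heq
      have l1 := lo_pos_of_mem S hmi
      have l2 := lo_pos_of_mem S hmj
      have l3 := lo_le_card S i
      have l4 := lo_le_card S j
      have l5 : lo S i = lo S j := by omega
      by_contra hne
      rcases lt_or_gt_of_ne hne with h | h
      · have := lo_lt_of_mem S h hmj; omega
      · have := lo_lt_of_mem S h hmi; omega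
    · rw [piS_mem hi.1 hi.2 hmi, piS_not_mem hj.1 hj.2 hmj] at heq
      have l1 := lo_pos_of_mem S hmi
      have l2 := lo_le_card S i
      have l3 := lo_sub_of_not_mem S hS hj.1 hmj
      have l4 := lo_le S hS j
      omega
    · rw [piS_not_mem hi.1 hi.2 hmi, piS_mem hj.1 hj.2 hmj] at heq
      have l1 := lo_pos_of_mem S hmj
      have l2 := lo_le_card S j
      have l3 := lo_sub_of_not_mem S hS hi.1 hmi
      have l4 := lo_le S hS i
      omega
    · rw [piS_not_mem hi.1 hi.2 hmi, piS_not_mem hj.1 hj.2 hmj] at heq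
      have l0 := lo_le S hS i
      have l0' := lo_le S hS j
      have l5 : i - lo S i = j - lo S j := by omega
      by_contra hne
      rcases lt_or_gt_of_ne hne with h | h
      · have := hi_lt_of_not_mem S hS h hmj; omega
      · have := hi_lt_of_not_mem S hS h hmi; omega

lemma type5_piS (n : ℕ) (S : Finset ℕ) (hS : S ⊆ Finset.Icc 1 n) (h1 : S.Nonempty)
    (h2 : S ≠ Finset.Icc 1 n) : Type5 n (piS n S) := by
  have hcard : S.card < n := by
    have := Finset.card_lt_card (Finset.ssubset_iff_subset_ne.2 ⟨hS, h2⟩)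
    rwa [card_Icc_one] at this
  have hcard1 : 1 ≤ S.card := Finset.card_pos.2 h1
  refine ⟨piS_signedPerm n S hS, S.card, hcard1, by omega, ?_, ?_⟩
  · show ((List.range n).map (fun j => piS n S (j+1))).filter _ = _
    rw [(filters_piS n S hS n le_rfl).1, lo_eq_card S hS, bridge]
  · show ((List.range n).map (fun j => piS n S (j+1))).filter _ = _
    rw [(filters_piS n S hS n le_rfl).2, lo_eq_card S hS, bridge]

/-- The set of positions where `π` is negative. -/
def Sof (n : ℕ) (π : ℕ → ℤ) : Finset ℕ := (Finset.Icc 1 n).filter (fun i => π i < 0)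

lemma type5_to_piS {n : ℕ} {π : ℕ → ℤ} (hT : Type5 n π) :
    π = piS n (Sof n π) ∧ Sof n π ⊆ Finset.Icc 1 n ∧ (Sof n π).Nonempty ∧
      Sof n π ≠ Finset.Icc 1 n := by
  obtain ⟨⟨h0, hgt, habs, hinj⟩, k, hk1, hk2, hneg, hpos⟩ := hT
  set S := Sof n π with hSdef
  have hS : S ⊆ Finset.Icc 1 n := Finset.filter_subset _ _
  have hnz : ∀ i, 1 ≤ i → i ≤ n → π i ≠ 0 := by
    intro i hi1 hi2 hc
    have := (habs i (Finset.mem_Icc.2 ⟨hi1, hi2⟩)).1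
    rw [hc] at this
    simp at this
  have hmem : ∀ i, 1 ≤ i → i ≤ n → (i ∈ S ↔ π i < 0) := by
    intro i h1 h2
    rw [hSdef, Sof, Finset.mem_filter, Finset.mem_Icc]
    tauto
  set L : List ℤ := toListP n π with hL
  set M : List ℤ := toListP n (piS n S) with hM
  have hLlen : L.length = n := by simp [hL, toListP]
  have hMlen : M.length = n := by simp [hM, toListP]
  have hLget : ∀ (i : ℕ) (h : i < L.length), L.get ⟨i, h⟩ = π (i+1) := by
    intro i h; simp [hL, toListP]
  have hMget : ∀ (i : ℕ) (h : i < M.length), M.get ⟨i, h⟩ = piS n S (i+1) := by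
    intro i h; simp [hM, toListP]
  have hmask : ∀ (i : ℕ) (h1 : i < L.length) (h2 : i < M.length),
      (L.get ⟨i, h1⟩ < 0 ↔ M.get ⟨i, h2⟩ < 0) := by
    intro i h1 h2
    rw [hLget i h1, hMget i h2]
    have hi1 : 1 ≤ i + 1 := by omega
    have hi2 : i + 1 ≤ n := by omega
    by_cases hm : (i+1) ∈ S
    · have := piS_neg hi1 hi2 hm
      have := (hmem (i+1) hi1 hi2).1 hm
      constructor <;> intro <;> assumption
    · have h3 := piS_pos hS hi1 hi2 hm
      have h4 : ¬ π (i+1) < 0 := fun hc => hm ((hmem (i+1) hi1 hi2).2 hc)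
      constructor <;> intro <;> omega
  have hcount := mask_count L M (by omega) hmask
  have e1 : (L.filter (fun x => decide (x < 0))).length = k := by
    rw [hneg, bridge]; simp
  have e2 : (M.filter (fun x => decide (x < 0))).length = S.card := by
    show ((toListP n (piS n S)).filter _).length = _
    rw [show toListP n (piS n S) = (List.range n).map (fun j => piS n S (j+1)) from rfl,
      (filters_piS n S hS n le_rfl).1, lo_eq_card S hS]
    simp
  have hkcard : S.card = k := by omega
  have hfneg : L.filter (fun x => decide (x < 0)) = M.filter (fun x => decide (x < 0)) := by
    rw [hneg]
    show _ = (toListP n (piS n S)).filter _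
    rw [show toListP n (piS n S) = (List.range n).map (fun j => piS n S (j+1)) from rfl,
      (filters_piS n S hS n le_rfl).1, lo_eq_card S hS, hkcard, bridge]
  have hfpos : L.filter (fun x => decide (0 < x)) = M.filter (fun x => decide (0 < x)) := by
    rw [hpos]
    show _ = (toListP n (piS n S)).filter _
    rw [show toListP n (piS n S) = (List.range n).map (fun j => piS n S (j+1)) from rfl,
      (filters_piS n S hS n le_rfl).2, lo_eq_card S hS, hkcard, bridge]
  have hLnz : ∀ x ∈ L, x ≠ 0 := by
    intro x hx
    rw [List.mem_iff_get] at hx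
    obtain ⟨⟨j, hjl⟩, rfl⟩ := hx
    rw [hLget j hjl]
    have hjn : j < n := by omega
    exact hnz (j+1) (by omega) (by omega)
  have hMnz : ∀ x ∈ M, x ≠ 0 := by
    intro x hx
    rw [List.mem_iff_get] at hx
    obtain ⟨⟨j, hjl⟩, rfl⟩ := hx
    rw [hMget j hjl]
    have hjn : j < n := by omega
    by_cases hm : (j+1) ∈ S
    · have := piS_neg (n := n) (by omega) (by omega) hm; omega
    · have := piS_pos hS (by omega) (by omega) hm; omega
  have hLM : L = M := list_recon L M hLnz hMnz (by omega) hmask hfneg hfpos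
  refine ⟨?_, hS, Finset.card_pos.1 (by omega), ?_⟩
  · funext i
    by_cases hi : 1 ≤ i ∧ i ≤ n
    · have hlt : i - 1 < L.length := by omega
      have hlt' : i - 1 < M.length := by omega
      have hgg := List.get_of_eq hLM ⟨i-1, hlt⟩
      rw [hLget _ hlt] at hgg
      simp only [Fin.cast_mk] at hgg
      rw [hMget] at hgg
      rw [show i - 1 + 1 = i from by omega] at hgg
      exact hgg
    · rw [piS, if_neg hi]
      rcases Nat.lt_or_ge i 1 with h | h
      · rw [show i = 0 from by omega]; exact h0
      · exact hgt i (by omega)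
  · intro hc
    rw [hc, card_Icc_one] at hkcard
    omega

lemma structure_thm {n a b : ℕ} {T : ℕ × ℕ → ℕ} (hb2 : 2 ≤ b)
    (hT : IsStdDominoTableau n [a, b] T) :
    ∃ S : Finset ℕ, S ⊆ Finset.Icc 1 n ∧ S.Nonempty ∧ S ≠ {1} ∧
      a = pf S n ∧ b = qf S n ∧ T = TS n S := by
  obtain ⟨⟨hsort, hposl⟩, hsum, hzero, hval, hfib, hrow, hcol⟩ := hT
  have hba : b ≤ a := by
    simp [List.pairwise_cons] at hsort
    exact hsort
  have hsum' : a + b = 2 * n := by simpa using hsum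
  have hn2 : 2 ≤ n := by omega
  set S : Finset ℕ := (Finset.Icc 1 n).filter (fun i => ∃ c, c < b ∧ T (1, c) = i) with hSdef
  have hval' : ∀ r c : ℕ, ((r = 0 ∧ c < a) ∨ (r = 1 ∧ c < b)) →
      1 ≤ T (r, c) ∧ T (r, c) ≤ n := by
    intro r c h
    have := hval (r, c) ((mem_cellsOf_pair hba (r, c)).2 h)
    rwa [Finset.mem_Icc] at this
  have hrow0 : ∀ c1 c2 : ℕ, c1 ≤ c2 → c2 < a → T (0, c1) ≤ T (0, c2) := by
    have aux : ∀ d c1 : ℕ, c1 + d < a → T (0, c1) ≤ T (0, c1 + d) := by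
      intro d
      induction d with
      | zero => intro c1 _; exact le_refl _
      | succ d ih =>
        intro c1 h
        have h1 : T (0, c1) ≤ T (0, c1 + d) := ih c1 (by omega)
        have h2 : T (0, c1 + d) ≤ T (0, c1 + d + 1) := by
          apply hrow 0 (c1 + d)
          rw [mem_cellsOf_pair hba]
          left
          exact ⟨rfl, by omega⟩
        exact le_trans h1 h2
    intro c1 c2 h h2
    have := aux (c2 - c1) c1 (by omega)
    rwa [show c1 + (c2 - c1) = c2 from by omega] at this
  have hrow1 : ∀ c1 c2 : ℕ, c1 ≤ c2 → c2 < b → T (1, c1) ≤ T (1, c2) := by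
    have aux : ∀ d c1 : ℕ, c1 + d < b → T (1, c1) ≤ T (1, c1 + d) := by
      intro d
      induction d with
      | zero => intro c1 _; exact le_refl _
      | succ d ih =>
        intro c1 h
        have h1 : T (1, c1) ≤ T (1, c1 + d) := ih c1 (by omega)
        have h2 : T (1, c1 + d) ≤ T (1, c1 + d + 1) := by
          apply hrow 1 (c1 + d)
          rw [mem_cellsOf_pair hba]
          right
          exact ⟨rfl, by omega⟩
        exact le_trans h1 h2
    intro c1 c2 h h2
    have := aux (c2 - c1) c1 (by omega)
    rwa [show c1 + (c2 - c1) = c2 from by omega] at this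
  have hcol0 : ∀ c : ℕ, c < b → T (0, c) ≤ T (1, c) := by
    intro c hc
    apply hcol 0 c
    rw [mem_cellsOf_pair hba]
    right
    exact ⟨rfl, hc⟩
  have main : ∀ i, i ≤ n → (pf S i ≤ a ∧ qf S i ≤ b ∧
      (∀ c, c < a → (T (0, c) ≤ i ↔ c < pf S i)) ∧
      (∀ c, c < b → (T (1, c) ≤ i ↔ c < qf S i))) := by
    intro i
    induction i with
    | zero =>
      intro _
      have hq0 : qf S 0 = 0 := rfl
      have hp0 : pf S 0 = 0 := by simp [pf, hq0]
      refine ⟨Nat.zero_le _, Nat.zero_le _, ?_, ?_⟩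
      · intro c hc
        rw [hp0]
        constructor
        · intro h
          have := (hval' 0 c (Or.inl ⟨rfl, hc⟩)).1
          omega
        · intro h; omega
      · intro c hc
        rw [hq0]
        constructor
        · intro h
          have := (hval' 1 c (Or.inr ⟨rfl, hc⟩)).1
          omega
        · intro h; omega
    | succ i ih =>
      intro hin
      obtain ⟨hpa, hqb, h0, h1⟩ := ih (by omega)
      have hpq := pf_add_qf S i
      have hqp := qf_le_pf S i
      have hqi := qf_le S i
      obtain ⟨c, d, hcmem, hdmem, hne, hadj, hfil⟩ :=
        hfib (i+1) (Finset.mem_Icc.2 ⟨by omega, hin⟩)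
      have hfib2 : ∃ m,
          (m + 1 < a ∧ (cellsOf [a,b]).filter (fun x => T x = i+1) = {((0:ℕ),m),(0,m+1)}) ∨
          (m + 1 < b ∧ (cellsOf [a,b]).filter (fun x => T x = i+1) = {((1:ℕ),m),(1,m+1)}) ∨
          (m < b ∧ (cellsOf [a,b]).filter (fun x => T x = i+1) = {((0:ℕ),m),(1,m)}) := by
        obtain ⟨rc, cc⟩ := c
        obtain ⟨rd, cd⟩ := d
        have hc2 := (mem_cellsOf_pair hba _).1 hcmem
        have hd2 := (mem_cellsOf_pair hba _).1 hdmem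
        simp only at hc2 hd2
        rcases hadj with ⟨hr, h2 | h2⟩ | ⟨hcc, h2 | h2⟩
        · -- c = (r, cc), d = (r, cc+1)
          simp only at hr h2
          subst hr; subst h2
          rcases hd2 with ⟨hr0, hlt⟩ | ⟨hr1, hlt⟩
          · exact ⟨cc, Or.inl ⟨hlt, by rw [hfil, hr0]⟩⟩
          · exact ⟨cc, Or.inr (Or.inl ⟨hlt, by rw [hfil, hr1]⟩)⟩
        · -- d = (r, cd), c = (r, cd+1)
          simp only at hr h2
          subst hr; subst h2
          rcases hc2 with ⟨hr0, hlt⟩ | ⟨hr1, hlt⟩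
          · exact ⟨cd, Or.inl ⟨hlt, by rw [hfil, hr0, Finset.pair_comm]⟩⟩
          · exact ⟨cd, Or.inr (Or.inl ⟨hlt, by rw [hfil, hr1, Finset.pair_comm]⟩)⟩
        · -- vertical, rc + 1 = rd
          simp only at hcc h2
          subst hcc
          have hrc : rc = 0 := by omega
          have hrd : rd = 1 := by omega
          subst hrc
          refine ⟨cc, Or.inr (Or.inr ⟨?_, by rw [hfil, hrd]⟩)⟩
          rw [hrd] at hd2
          rcases hd2 with ⟨hc, -⟩ | ⟨-, hlt⟩
          · omega
          · exact hlt
        · -- vertical, rd + 1 = rc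
          simp only at hcc h2
          subst hcc
          have hrc : rc = 1 := by omega
          have hrd : rd = 0 := by omega
          subst hrc
          refine ⟨cc, Or.inr (Or.inr ⟨?_, by rw [hfil, hrd, Finset.pair_comm]⟩)⟩
          rcases hc2 with ⟨hc, -⟩ | ⟨-, hlt⟩
          · omega
          · exact hlt
      clear hfil hne hadj hcmem hdmem
      obtain ⟨m, hcase⟩ := hfib2
      rcases hcase with ⟨hma, hfil⟩ | ⟨hmb, hfil⟩ | ⟨hmb, hfil⟩
      · -- horizontal in row 0
        have hfil' : ∀ x, x ∈ cellsOf [a,b] → (T x = i+1 ↔ x = (0,m) ∨ x = (0,m+1)) := by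
          intro x hx
          constructor
          · intro h
            have : x ∈ (cellsOf [a,b]).filter (fun x => T x = i+1) :=
              Finset.mem_filter.2 ⟨hx, h⟩
            rw [hfil] at this
            simpa using this
          · rintro (rfl | rfl)
            · have : ((0:ℕ),m) ∈ (cellsOf [a,b]).filter (fun x => T x = i+1) := by
                rw [hfil]; simp
              exact (Finset.mem_filter.1 this).2
            · have : ((0:ℕ),m+1) ∈ (cellsOf [a,b]).filter (fun x => T x = i+1) := by
                rw [hfil]; simp
              exact (Finset.mem_filter.1 this).2
        have hmem0 : ∀ m', m' < a → (T (0, m') = i+1 ↔ m' = m ∨ m' = m+1) := by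
          intro m' hm'
          rw [hfil' (0, m') ((mem_cellsOf_pair hba _).2 (Or.inl ⟨rfl, hm'⟩))]
          simp [Prod.ext_iff]
        have hmem1 : ∀ m', m' < b → ¬ (T (1, m') = i+1) := by
          intro m' hm' hc
          have := (hfil' (1, m') ((mem_cellsOf_pair hba _).2 (Or.inr ⟨rfl, hm'⟩))).1 hc
          simp [Prod.ext_iff] at this
        have hTm : T (0, m) = i + 1 := (hmem0 m (by omega)).2 (Or.inl rfl)
        have hm : m = pf S i := by
          have hge : pf S i ≤ m := by
            by_contra hlt
            have := (h0 m (by omega)).2 (by omega)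
            omega
          by_contra hne
          have hplt : pf S i < m := by omega
          have hch : T (0, pf S i) ≤ T (0, m) := hrow0 _ _ (by omega) (by omega)
          have hnotle : ¬ T (0, pf S i) ≤ i := by
            intro hc
            have := (h0 (pf S i) (by omega)).1 hc
            omega
          have : T (0, pf S i) = i + 1 := by omega
          have := (hmem0 (pf S i) (by omega)).1 this
          omega
        have hSnot : (i+1) ∉ S := by
          rw [hSdef, Finset.mem_filter]
          rintro ⟨-, cc, hcc, hTc⟩
          exact hmem1 cc hcc hTc
        have hq1 := qf_high S i hSnot
        have hp1 := pf_high S i hSnot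
        refine ⟨by omega, by omega, ?_, ?_⟩
        · intro cc hcc
          rw [hp1, ← hm]
          constructor
          · intro h
            rcases Nat.lt_or_ge (T (0, cc)) (i+1) with h' | h'
            · have := (h0 cc hcc).1 (by omega)
              omega
            · have : T (0, cc) = i + 1 := by omega
              have := (hmem0 cc hcc).1 this
              omega
          · intro h
            rcases Nat.lt_or_ge cc m with h' | h'
            · have := (h0 cc hcc).2 (by omega)
              omega
            · have : T (0, cc) = i + 1 := (hmem0 cc hcc).2 (by omega)
              omega
        · intro cc hcc
          rw [hq1]
          constructor
          · intro h
            rcases Nat.lt_or_ge (T (1, cc)) (i+1) with h' | h'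
            · exact (h1 cc hcc).1 (by omega)
            · have : T (1, cc) = i + 1 := by omega
              exact absurd this (hmem1 cc hcc)
          · intro h
            have := (h1 cc hcc).2 h
            omega
      · -- horizontal in row 1
        have hfil' : ∀ x, x ∈ cellsOf [a,b] → (T x = i+1 ↔ x = (1,m) ∨ x = (1,m+1)) := by
          intro x hx
          constructor
          · intro h
            have : x ∈ (cellsOf [a,b]).filter (fun x => T x = i+1) :=
              Finset.mem_filter.2 ⟨hx, h⟩
            rw [hfil] at this
            simpa using this
          · rintro (rfl | rfl)
            · have : ((1:ℕ),m) ∈ (cellsOf [a,b]).filter (fun x => T x = i+1) := by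
                rw [hfil]; simp
              exact (Finset.mem_filter.1 this).2
            · have : ((1:ℕ),m+1) ∈ (cellsOf [a,b]).filter (fun x => T x = i+1) := by
                rw [hfil]; simp
              exact (Finset.mem_filter.1 this).2
        have hmem1 : ∀ m', m' < b → (T (1, m') = i+1 ↔ m' = m ∨ m' = m+1) := by
          intro m' hm'
          rw [hfil' (1, m') ((mem_cellsOf_pair hba _).2 (Or.inr ⟨rfl, hm'⟩))]
          simp [Prod.ext_iff]
        have hmem0 : ∀ m', m' < a → ¬ (T (0, m') = i+1) := by
          intro m' hm' hc
          have := (hfil' (0, m') ((mem_cellsOf_pair hba _).2 (Or.inl ⟨rfl, hm'⟩))).1 hc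
          simp [Prod.ext_iff] at this
        have hTm : T (1, m) = i + 1 := (hmem1 m (by omega)).2 (Or.inl rfl)
        have hTm1 : T (1, m+1) = i + 1 := (hmem1 (m+1) (by omega)).2 (Or.inr rfl)
        have hm : m = qf S i := by
          have hge : qf S i ≤ m := by
            by_contra hlt
            have := (h1 m (by omega)).2 (by omega)
            omega
          by_contra hne
          have hqlt : qf S i < m := by omega
          have hch : T (1, qf S i) ≤ T (1, m) := hrow1 _ _ (by omega) (by omega)
          have hnotle : ¬ T (1, qf S i) ≤ i := by
            intro hc
            have := (h1 (qf S i) (by omega)).1 hc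
            omega
          have : T (1, qf S i) = i + 1 := by omega
          have := (hmem1 (qf S i) (by omega)).1 this
          omega
        have hSmem : (i+1) ∈ S := by
          rw [hSdef, Finset.mem_filter, Finset.mem_Icc]
          exact ⟨⟨by omega, hin⟩, m, by omega, hTm⟩
        have hqne : qf S i ≠ i := by
          intro hq
          have hpi : pf S i = i := by omega
          have hcol1 : T (0, m+1) ≤ T (1, m+1) := hcol0 (m+1) (by omega)
          have hnotle : ¬ T (0, m+1) ≤ i := by
            intro hc
            have := (h0 (m+1) (by omega)).1 hc
            omega
          have : T (0, m+1) = i + 1 := by omega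
          exact hmem0 (m+1) (by omega) this
        have hq1 := qf_horiz S i hSmem hqne
        have hp1 := pf_horiz S i hSmem hqne
        refine ⟨by omega, by omega, ?_, ?_⟩
        · intro cc hcc
          rw [hp1]
          constructor
          · intro h
            rcases Nat.lt_or_ge (T (0, cc)) (i+1) with h' | h'
            · exact (h0 cc hcc).1 (by omega)
            · have : T (0, cc) = i + 1 := by omega
              exact absurd this (hmem0 cc hcc)
          · intro h
            have := (h0 cc hcc).2 h
            omega
        · intro cc hcc
          rw [hq1, ← hm]
          constructor
          · intro h
            rcases Nat.lt_or_ge (T (1, cc)) (i+1) with h' | h'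
            · have := (h1 cc hcc).1 (by omega)
              omega
            · have : T (1, cc) = i + 1 := by omega
              have := (hmem1 cc hcc).1 this
              omega
          · intro h
            rcases Nat.lt_or_ge cc m with h' | h'
            · have := (h1 cc hcc).2 (by omega)
              omega
            · have : T (1, cc) = i + 1 := (hmem1 cc hcc).2 (by omega)
              omega
      · -- vertical
        have hfil' : ∀ x, x ∈ cellsOf [a,b] → (T x = i+1 ↔ x = (0,m) ∨ x = (1,m)) := by
          intro x hx
          constructor
          · intro h
            have : x ∈ (cellsOf [a,b]).filter (fun x => T x = i+1) :=
              Finset.mem_filter.2 ⟨hx, h⟩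
            rw [hfil] at this
            simpa using this
          · rintro (rfl | rfl)
            · have : ((0:ℕ),m) ∈ (cellsOf [a,b]).filter (fun x => T x = i+1) := by
                rw [hfil]; simp
              exact (Finset.mem_filter.1 this).2
            · have : ((1:ℕ),m) ∈ (cellsOf [a,b]).filter (fun x => T x = i+1) := by
                rw [hfil]; simp
              exact (Finset.mem_filter.1 this).2
        have hmem0 : ∀ m', m' < a → (T (0, m') = i+1 ↔ m' = m) := by
          intro m' hm'
          rw [hfil' (0, m') ((mem_cellsOf_pair hba _).2 (Or.inl ⟨rfl, hm'⟩))]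
          simp [Prod.ext_iff]
        have hmem1 : ∀ m', m' < b → (T (1, m') = i+1 ↔ m' = m) := by
          intro m' hm'
          rw [hfil' (1, m') ((mem_cellsOf_pair hba _).2 (Or.inr ⟨rfl, hm'⟩))]
          simp [Prod.ext_iff]
        have hTm0 : T (0, m) = i + 1 := (hmem0 m (by omega)).2 rfl
        have hTm1 : T (1, m) = i + 1 := (hmem1 m (by omega)).2 rfl
        have hge0 : pf S i ≤ m := by
          by_contra hlt
          have := (h0 m (by omega)).2 (by omega)
          omega
        have hge1 : qf S i ≤ m := by
          by_contra hlt
          have := (h1 m (by omega)).2 (by omega)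
          omega
        have hm : m = qf S i := by
          by_contra hne
          have hqlt : qf S i < m := by omega
          have hch : T (1, qf S i) ≤ T (1, m) := hrow1 _ _ (by omega) (by omega)
          have hnotle : ¬ T (1, qf S i) ≤ i := by
            intro hc
            have := (h1 (qf S i) (by omega)).1 hc
            omega
          have : T (1, qf S i) = i + 1 := by omega
          have := (hmem1 (qf S i) (by omega)).1 this
          omega
        have hqip : qf S i = i := by omega
        have hSmem : (i+1) ∈ S := by
          rw [hSdef, Finset.mem_filter, Finset.mem_Icc]
          exact ⟨⟨by omega, hin⟩, m, by omega, hTm1⟩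
        have hq1 := qf_vert S i hSmem hqip
        have hp1 := pf_vert S i hSmem hqip
        refine ⟨by omega, by omega, ?_, ?_⟩
        · intro cc hcc
          rw [hp1]
          constructor
          · intro h
            rcases Nat.lt_or_ge (T (0, cc)) (i+1) with h' | h'
            · have := (h0 cc hcc).1 (by omega)
              omega
            · have : T (0, cc) = i + 1 := by omega
              have := (hmem0 cc hcc).1 this
              omega
          · intro h
            rcases Nat.lt_or_ge cc m with h' | h'
            · have := (h0 cc hcc).2 (by omega)
              omega
            · have heq : cc = m := by omega
              have : T (0, cc) = i + 1 := (hmem0 cc hcc).2 heq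
              omega
        · intro cc hcc
          rw [hq1]
          constructor
          · intro h
            rcases Nat.lt_or_ge (T (1, cc)) (i+1) with h' | h'
            · have := (h1 cc hcc).1 (by omega)
              omega
            · have : T (1, cc) = i + 1 := by omega
              have := (hmem1 cc hcc).1 this
              omega
          · intro h
            rcases Nat.lt_or_ge cc m with h' | h'
            · have := (h1 cc hcc).2 (by omega)
              omega
            · have heq : cc = m := by omega
              have : T (1, cc) = i + 1 := (hmem1 cc hcc).2 heq
              omega
  obtain ⟨hpa, hqb, h0, h1⟩ := main n le_rfl
  have hpfn : pf S n = a := by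
    rcases Nat.lt_or_ge (pf S n) a with h | h
    · have := (h0 (pf S n) h).1 (hval' 0 (pf S n) (Or.inl ⟨rfl, h⟩)).2
      omega
    · omega
  have hqfn : qf S n = b := by
    rcases Nat.lt_or_ge (qf S n) b with h | h
    · have := (h1 (qf S n) h).1 (hval' 1 (qf S n) (Or.inr ⟨rfl, h⟩)).2
      omega
    · omega
  have hSsub : S ⊆ Finset.Icc 1 n := Finset.filter_subset _ _
  have hSne : S.Nonempty := by
    refine ⟨T (1, 0), ?_⟩
    rw [hSdef, Finset.mem_filter, Finset.mem_Icc]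
    have := hval' 1 0 (Or.inr ⟨rfl, by omega⟩)
    exact ⟨⟨this.1, this.2⟩, 0, by omega, rfl⟩
  have hS1 : S ≠ {1} := by
    intro hc
    rw [hc] at hqfn
    rw [qf_singleton_one n (by omega)] at hqfn
    omega
  refine ⟨S, hSsub, hSne, hS1, hpfn.symm, hqfn.symm, ?_⟩
  funext x
  obtain ⟨r, cc⟩ := x
  by_cases hx : (r = 0 ∧ cc < a) ∨ (r = 1 ∧ cc < b)
  · rcases hx with ⟨rfl, hcc⟩ | ⟨rfl, hcc⟩
    · rw [TS_row0 n S cc (by omega)]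
      have hv := hval' 0 cc (Or.inl ⟨rfl, hcc⟩)
      obtain ⟨j, hj⟩ : ∃ j, T (0, cc) = j + 1 := ⟨T (0, cc) - 1, by omega⟩
      rw [hj]
      symm
      rw [lab0_eq_iff]
      constructor
      · have := ((main j (by omega)).2.2.1 cc hcc)
        omega
      · have := ((main (j+1) (by omega)).2.2.1 cc hcc)
        omega
    · rw [TS_row1 n S cc (by omega)]
      have hv := hval' 1 cc (Or.inr ⟨rfl, hcc⟩)
      obtain ⟨j, hj⟩ : ∃ j, T (1, cc) = j + 1 := ⟨T (1, cc) - 1, by omega⟩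
      rw [hj]
      symm
      rw [lab1_eq_iff S cc j ⟨n, by omega⟩]
      constructor
      · have := ((main j (by omega)).2.2.2 cc hcc)
        omega
      · have := ((main (j+1) (by omega)).2.2.2 cc hcc)
        omega
  · rw [hzero (r, cc) (fun hc => hx ((mem_cellsOf_pair hba _).1 hc))]
    rw [TS]
    simp only
    rw [if_neg, if_neg]
    · rw [hqfn]; tauto
    · rw [hpfn]; tauto

lemma sig_subset (n : ℕ) (hn : 1 ≤ n) {S : Finset ℕ} (hS : S ⊆ Finset.Icc 1 n) :
    sig n S ⊆ Finset.Icc 1 n := by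
  rw [sig]; split_ifs with h
  · exact subset_refl _
  · exact hS

lemma sig_nonempty (n : ℕ) (hn : 1 ≤ n) {S : Finset ℕ} (hS : S.Nonempty) :
    (sig n S).Nonempty := by
  rw [sig]; split_ifs with h
  · exact ⟨1, Finset.mem_Icc.2 ⟨le_refl 1, hn⟩⟩
  · exact hS

lemma Icc_ne_singleton (n : ℕ) (hn : 2 ≤ n) : Finset.Icc 1 n ≠ ({1} : Finset ℕ) := by
  intro h
  have h2 : (2 : ℕ) ∈ Finset.Icc 1 n := Finset.mem_Icc.2 ⟨by omega, hn⟩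
  rw [h] at h2
  simp at h2

lemma sig_ne_one (n : ℕ) (hn : 2 ≤ n) (S : Finset ℕ) (hS : S ≠ Finset.Icc 1 n) :
    sig n S ≠ ({1} : Finset ℕ) := by
  rw [sig]; split_ifs with h
  · exact Icc_ne_singleton n hn
  · exact h

lemma sig_inj (n : ℕ) (hn : 2 ≤ n) {S S' : Finset ℕ} (h1 : S ≠ Finset.Icc 1 n)
    (h2 : S' ≠ Finset.Icc 1 n) (heq : sig n S = sig n S') : S = S' := by
  rw [sig, sig] at heq
  split_ifs at heq with ha hb hb
  · rw [ha, hb]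
  · exact absurd heq.symm h2
  · exact absurd heq h1
  · exact heq

lemma Sof_piS (n : ℕ) {S : Finset ℕ} (hS : S ⊆ Finset.Icc 1 n) : Sof n (piS n S) = S := by
  ext i
  rw [Sof, Finset.mem_filter, Finset.mem_Icc]
  constructor
  · rintro ⟨⟨hi1, hi2⟩, hneg⟩
    by_contra hm
    have := piS_pos hS hi1 hi2 hm
    omega
  · intro hm
    have hi := Finset.mem_Icc.1 (hS hm)
    exact ⟨hi, piS_neg hi.1 hi.2 hm⟩

/-- Packaged facts for a Type 5 permutation. -/
lemma package {n : ℕ} (hn : 2 ≤ n) {π : ℕ → ℤ} (hT : Type5 n π) :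
    ∃ a b, a + b = 2 * n ∧ b ≤ a ∧ 2 ≤ b ∧
      IsStdDominoTableau n [a, b] (TS n (sig n (Sof n π))) ∧
      DesSet n π = DominoDes n [a, b] (TS n (sig n (Sof n π))) := by
  obtain ⟨hpi, hSsub, hSne, hSfull⟩ := type5_to_piS hT
  set S := Sof n π
  set S2 := sig n S with hS2def
  have hsub2 : S2 ⊆ Finset.Icc 1 n := sig_subset n (by omega) hSsub
  have hne2 : S2.Nonempty := sig_nonempty n (by omega) hSne
  have hone2 : S2 ≠ {1} := sig_ne_one n hn S hSfull
  have hq2 : 2 ≤ qf S2 n := two_le_qf n S2 hsub2 hne2 hone2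
  refine ⟨pf S2 n, qf S2 n, ?_, qf_le_pf S2 n, hq2, TS_std n S2 hq2, ?_⟩
  · rw [Nat.add_comm] at *
    have := pf_add_qf S2 n
    omega
  · rw [DominoDes_TS n S2, hS2def, desSetOf_sig n S (by omega), hpi, DesSet_piS n S hSsub]

end T5

/-- Type 5 signed arc permutations are in descent-preserving bijection with the
standard domino tableaux of two-row shapes `(a, 2n-a)`, `a ≥ 2n-a ≥ 2`. -/
theorem type5_bijection (n : ℕ) (hn : 2 ≤ n) :
    ∃ φ : (ℕ → ℤ) → ((ℕ × ℕ) → ℕ),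
      Set.BijOn φ {π | Type5 n π}
        {T | ∃ a b, a + b = 2 * n ∧ b ≤ a ∧ 2 ≤ b ∧ IsStdDominoTableau n [a, b] T} ∧
      ∀ π : ℕ → ℤ, Type5 n π → ∃ a b, a + b = 2 * n ∧ b ≤ a ∧ 2 ≤ b ∧
        IsStdDominoTableau n [a, b] (φ π) ∧ DesSet n π = DominoDes n [a, b] (φ π) := by
  classical
  refine ⟨fun π => T5.TS n (T5.sig n (T5.Sof n π)), ⟨?_, ?_, ?_⟩, ?_⟩
  · -- MapsTo
    intro π hπ
    obtain ⟨a, b, h1, h2, h3, h4, -⟩ := T5.package hn hπ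
    exact ⟨a, b, h1, h2, h3, h4⟩
  · -- InjOn
    intro π1 h1 π2 h2 heq
    obtain ⟨hpi1, hsub1, hne1, hfull1⟩ := T5.type5_to_piS h1
    obtain ⟨hpi2, hsub2, hne2, hfull2⟩ := T5.type5_to_piS h2
    have hs : T5.sig n (T5.Sof n π1) = T5.sig n (T5.Sof n π2) :=
      T5.TS_inj n _ _ (T5.sig_subset n (by omega) hsub1) (T5.sig_subset n (by omega) hsub2) heq
    have : T5.Sof n π1 = T5.Sof n π2 := T5.sig_inj n hn hfull1 hfull2 hs
    rw [hpi1, hpi2, this]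
  · -- SurjOn
    intro T hTmem
    obtain ⟨a, b, hsum, hba, hb2, hstd⟩ := hTmem
    obtain ⟨S', hS'sub, hS'ne, hS'one, ha, hb, hTeq⟩ := T5.structure_thm hb2 hstd
    set S0 : Finset ℕ := if S' = Finset.Icc 1 n then {1} else S' with hS0def
    have hS0sub : S0 ⊆ Finset.Icc 1 n := by
      rw [hS0def]; split_ifs with h
      · intro x hx
        rw [Finset.mem_singleton] at hx
        subst hx
        exact Finset.mem_Icc.2 ⟨le_refl 1, by omega⟩
      · exact hS'sub
    have hS0ne : S0.Nonempty := by
      rw [hS0def]; split_ifs with h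
      · exact ⟨1, Finset.mem_singleton_self 1⟩
      · exact hS'ne
    have hS0full : S0 ≠ Finset.Icc 1 n := by
      rw [hS0def]; split_ifs with h
      · exact fun hc => T5.Icc_ne_singleton n hn hc.symm
      · exact h
    have hsig : T5.sig n S0 = S' := by
      by_cases h : S' = Finset.Icc 1 n
      · rw [hS0def]
        rw [if_pos h, T5.sig, if_pos rfl, h]
      · rw [hS0def]
        rw [if_neg h, T5.sig, if_neg hS'one]
    refine ⟨T5.piS n S0, T5.type5_piS n S0 hS0sub hS0ne hS0full, ?_⟩
    show T5.TS n (T5.sig n (T5.Sof n (T5.piS n S0))) = T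
    rw [T5.Sof_piS n hS0sub, hsig, ← hTeq]
  · -- descent preservation
    intro π hπ
    exact T5.package hn hπ
end

section
/- Type 1 signed arc permutations, namely the cyclic rotations k, k+1, ..., n, 1, 2, ..., k-1 for 2 ≤ k ≤ n together with the identity 1 2 ... n, are in descent-preserving bijection with the union of the singleton set of standard domino tableaux of shape (2n) and the set of standard domino tableaux of shape (2n-2,1,1); in particular there are exactly n such permutations, and the permutation k ... n 1 ... k-1 (k ≥ 2) has descent set {n-k+1} and corresponds to the unique tableau of shape (2n-2,1,1) whose vertical domino (across rows 2 and 3) has label n-k+2. -/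
/-- The cyclic rotation `k, k+1, …, n, 1, …, k-1` as a signed permutation. -/
def rotPerm (n k : ℕ) : ℕ → ℤ := fun i =>
  if 1 ≤ i ∧ i ≤ n then (((k - 1 + (i - 1)) % n : ℕ) : ℤ) + 1 else 0

/-- Type 1 signed arc permutations: the cyclic rotations (including the identity). -/
def Type1 (n : ℕ) (π : ℕ → ℤ) : Prop := ∃ k, 1 ≤ k ∧ k ≤ n ∧ π = rotPerm n k

def t1T0 (n : ℕ) : ℕ × ℕ → ℕ := fun c => if c.1 = 0 ∧ c.2 < 2*n then c.2/2 + 1 else 0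

def t1Tv (n m : ℕ) : ℕ × ℕ → ℕ := fun c =>
  if c.1 = 0 ∧ c.2 < 2*n - 2 then (if c.2 < 2*m - 2 then c.2/2 + 1 else c.2/2 + 2)
  else if (c.1 = 1 ∨ c.1 = 2) ∧ c.2 = 0 then m else 0

lemma t1cells1 (n : ℕ) (hn : 1 ≤ n) (c : ℕ × ℕ) :
    c ∈ cellsOf [2*n] ↔ c.1 = 0 ∧ c.2 < 2*n := by
  simp only [cellsOf, Finset.mem_filter, Finset.mem_product, Finset.mem_range, List.length_singleton]
  constructor
  · rintro ⟨⟨h1, _⟩, h3⟩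
    interval_cases h : c.1
    · simpa using h3
  · rintro ⟨h1, h2⟩
    refine ⟨⟨by omega, by simpa [h1] using h2⟩, by simpa [h1] using h2⟩

lemma t1cells2 (n : ℕ) (hn : 2 ≤ n) (c : ℕ × ℕ) :
    c ∈ cellsOf [2*n-2, 1, 1] ↔
      (c.1 = 0 ∧ c.2 < 2*n-2) ∨ (c.1 = 1 ∧ c.2 = 0) ∨ (c.1 = 2 ∧ c.2 = 0) := by
  simp only [cellsOf, Finset.mem_filter, Finset.mem_product, Finset.mem_range]
  have hfold : [2*n-2,1,1].foldr max 0 = 2*n-2 := by simp; omega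
  rw [hfold]
  constructor
  · rintro ⟨⟨h1, h2⟩, h3⟩
    simp only [List.length] at h1
    interval_cases h : c.1 <;> simp_all
  · rintro (⟨h1, h2⟩ | ⟨h1, h2⟩ | ⟨h1, h2⟩) <;> simp [h1, h2] <;> omega

lemma t1fibercard (n : ℕ) (l : List ℕ) (T : ℕ × ℕ → ℕ) (hT : IsStdDominoTableau n l T)
    (v : ℕ) (h1 : 1 ≤ v) (h2 : v ≤ n) :
    ((cellsOf l).filter (fun c => T c = v)).card = 2 := by
  obtain ⟨c, d, _, _, hne, _, hf⟩ := hT.2.2.2.2.1 v (Finset.mem_Icc.mpr ⟨h1, h2⟩)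
  rw [hf, Finset.card_insert_of_notMem (by simp [hne]), Finset.card_singleton]

lemma t1count (n : ℕ) (l : List ℕ) (T : ℕ × ℕ → ℕ) (hT : IsStdDominoTableau n l T)
    (i : ℕ) (hi : i ≤ n) :
    ((cellsOf l).filter (fun c => T c ≤ i)).card = 2 * i := by
  have heq : (cellsOf l).filter (fun c => T c ≤ i)
      = (Finset.Icc 1 i).biUnion (fun v => (cellsOf l).filter (fun c => T c = v)) := by
    ext c
    simp only [Finset.mem_filter, Finset.mem_biUnion, Finset.mem_Icc]
    constructor
    · rintro ⟨hc, hle⟩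
      have := Finset.mem_Icc.mp (hT.2.2.2.1 c hc)
      exact ⟨T c, ⟨this.1, hle⟩, hc, rfl⟩
    · rintro ⟨v, hv, hc, rfl⟩
      exact ⟨hc, hv.2⟩
  rw [heq, Finset.card_biUnion]
  · rw [Finset.sum_congr rfl (fun v hv => t1fibercard n l T hT v (Finset.mem_Icc.mp hv).1
      (le_trans (Finset.mem_Icc.mp hv).2 hi))]
    simp [Nat.card_Icc, mul_comm]
  · intro v _ w _ hvw
    simp only [Finset.disjoint_filter]  -- might not be right name
    intro c _ hcv hcw
    exact hvw (hcv ▸ hcw ▸ rfl)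

lemma t1mono_iff (N : ℕ) (f : ℕ → ℕ) (hf : ∀ a b, a ≤ b → b < N → f a ≤ f b)
    (i j : ℕ) (hj : j < N) :
    (f j ≤ i ↔ j < ((Finset.range N).filter (fun x => f x ≤ i)).card) := by
  constructor
  · intro h
    have hsub : Finset.range (j+1) ⊆ (Finset.range N).filter (fun x => f x ≤ i) := by
      intro a ha
      rw [Finset.mem_range] at ha
      exact Finset.mem_filter.mpr ⟨Finset.mem_range.mpr (by omega),
        le_trans (hf a j (by omega) hj) h⟩
    have := Finset.card_le_card hsub
    simpa using this
  · intro h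
    by_contra hcon
    have hsub : (Finset.range N).filter (fun x => f x ≤ i) ⊆ Finset.range j := by
      intro a ha
      obtain ⟨haN, hai⟩ := Finset.mem_filter.mp ha
      rw [Finset.mem_range] at haN ⊢
      by_contra hja
      exact hcon (le_trans (hf j a (by omega) haN) hai)
    have := Finset.card_le_card hsub
    simp at this
    omega

lemma t1flat_colcount (n : ℕ) (hn : 2 ≤ n) (T : ℕ × ℕ → ℕ)
    (hT : IsStdDominoTableau n [2*n] T) (i : ℕ) (hi : i ≤ n) :
    ((Finset.range (2*n)).filter (fun j => T (0,j) ≤ i)).card = 2 * i := by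
  have himg : (cellsOf [2*n]).filter (fun c => T c ≤ i)
      = ((Finset.range (2*n)).filter (fun j => T (0,j) ≤ i)).image (fun j => ((0:ℕ), j)) := by
    ext c
    simp only [Finset.mem_filter, Finset.mem_image, Finset.mem_range, t1cells1 n (by omega)]
    constructor
    · rintro ⟨⟨h0, hlt⟩, hle⟩
      have hc : ((0:ℕ), c.2) = c := Prod.ext h0.symm rfl
      exact ⟨c.2, ⟨hlt, by rwa [hc]⟩, hc⟩
    · rintro ⟨j, ⟨hj, hle⟩, rfl⟩
      exact ⟨⟨rfl, hj⟩, hle⟩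
  have hinj : Function.Injective (fun j : ℕ => ((0:ℕ), j)) := fun a b h => by
    simpa using congrArg Prod.snd h
  rw [← t1count n [2*n] T hT i hi, himg, Finset.card_image_of_injective _ hinj]

lemma t1flat_le_iff (n : ℕ) (hn : 2 ≤ n) (T : ℕ × ℕ → ℕ)
    (hT : IsStdDominoTableau n [2*n] T) (i j : ℕ) (hi : i ≤ n) (hj : j < 2*n) :
    (T (0,j) ≤ i ↔ j < 2*i) := by
  have hmono : ∀ a b, a ≤ b → b < 2*n → T (0,a) ≤ T (0,b) := by
    intro a b hab hb
    induction b, hab using Nat.le_induction with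
    | base => exact le_rfl
    | succ b hab ih =>
      exact le_trans (ih (by omega))
        (hT.2.2.2.2.2.1 0 b ((t1cells1 n (by omega) _).mpr ⟨rfl, hb⟩))
  rw [t1mono_iff (2*n) (fun j => T (0,j)) hmono i j hj,
    t1flat_colcount n hn T hT i hi]

lemma t1flat_eq (n : ℕ) (hn : 2 ≤ n) (T : ℕ × ℕ → ℕ)
    (hT : IsStdDominoTableau n [2*n] T) : T = t1T0 n := by
  funext c
  obtain ⟨r, j⟩ := c
  by_cases hc : r = 0 ∧ j < 2*n
  · obtain ⟨rfl, hj⟩ := hc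
    have h1 : T (0,j) ≤ j/2+1 :=
      (t1flat_le_iff n hn T hT (j/2+1) j (by omega) hj).mpr (by omega)
    have h2 : 1 ≤ T (0,j) :=
      (Finset.mem_Icc.mp (hT.2.2.2.1 _ ((t1cells1 n (by omega) _).mpr ⟨rfl, hj⟩))).1
    have h3 : j/2 = 0 ∨ ¬ (T (0,j) ≤ j/2) := by
      rcases Nat.eq_zero_or_pos (j/2) with h | h
      · exact Or.inl h
      · exact Or.inr (fun hle => by
          have := (t1flat_le_iff n hn T hT (j/2) j (by omega) hj).mp hle
          omega)
    have ht : t1T0 n (0, j) = j/2 + 1 := by simp [t1T0, hj]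
    rw [ht]
    omega
  · have hz : T (r, j) = 0 :=
      hT.2.2.1 _ (fun hmem => hc ((t1cells1 n (by omega) _).mp hmem))
    rw [hz]
    simp only [t1T0]
    split_ifs <;> omega

lemma t1T0_SDT (n : ℕ) (hn : 2 ≤ n) : IsStdDominoTableau n [2*n] (t1T0 n) := by
  refine ⟨⟨by simp, by simp; omega⟩, by simp, ?_, ?_, ?_, ?_, ?_⟩
  · intro c hc
    rw [t1cells1 n (by omega)] at hc
    simp only [t1T0]
    split_ifs <;> omega
  · intro c hc
    rw [t1cells1 n (by omega)] at hc
    simp only [t1T0, Finset.mem_Icc]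
    split_ifs with h <;> omega
  · intro i hi
    rw [Finset.mem_Icc] at hi
    refine ⟨(0, 2*i-2), (0, 2*i-1), (t1cells1 n (by omega) _).mpr ⟨rfl, by omega⟩,
      (t1cells1 n (by omega) _).mpr ⟨rfl, by omega⟩, by simp [Prod.ext_iff]; omega,
      Or.inl ⟨rfl, by omega⟩, ?_⟩
    ext ⟨r, j⟩
    rw [Finset.mem_filter]
    simp only [Finset.mem_filter, t1cells1 n (by omega), Finset.mem_insert,
      Finset.mem_singleton, Prod.mk.injEq, t1T0]
    split_ifs with h <;> omega
  · intro r c hc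
    rw [t1cells1 n (by omega)] at hc
    simp only [t1T0]
    split_ifs with h1 h2 <;> omega
  · intro r c hc
    rw [t1cells1 n (by omega)] at hc
    simp at hc

lemma t1Tv_SDT (n m : ℕ) (hn : 2 ≤ n) (hm2 : 2 ≤ m) (hmn : m ≤ n) :
    IsStdDominoTableau n [2*n-2,1,1] (t1Tv n m) := by
  refine ⟨⟨?_, ?_⟩, by simp; omega, ?_, ?_, ?_, ?_, ?_⟩
  · simp [List.pairwise_cons]; omega
  · intro x hx; simp at hx; rcases hx with h | h | h <;> omega
  · intro c hc
    rw [t1cells2 n hn] at hc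
    simp only [t1Tv]
    split_ifs <;> first | omega | (simp_all only [false_and, and_false]; omega) | simp_all only [false_and, and_false]
  · intro c hc
    rw [t1cells2 n hn] at hc
    simp only [t1Tv, Finset.mem_Icc]
    split_ifs <;> first | omega | (simp_all only [false_and, and_false]; omega) | simp_all only [false_and, and_false]
  · intro i hi
    rw [Finset.mem_Icc] at hi
    by_cases him : i = m
    · subst him
      refine ⟨(1,0), (2,0), (t1cells2 n hn _).mpr (Or.inr (Or.inl ⟨rfl, rfl⟩)),
        (t1cells2 n hn _).mpr (Or.inr (Or.inr ⟨rfl, rfl⟩)), by decide,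
        Or.inr ⟨rfl, Or.inl rfl⟩, ?_⟩
      ext ⟨r, j⟩
      rw [Finset.mem_filter]
      simp only [Finset.mem_filter, t1cells2 n hn, Finset.mem_insert, Finset.mem_singleton,
        Prod.mk.injEq, t1Tv]
      split_ifs <;> first | omega | (simp_all only [false_and, and_false]; omega) | simp_all only [false_and, and_false]
    · by_cases hlt : i < m
      · refine ⟨(0, 2*i-2), (0, 2*i-1), (t1cells2 n hn _).mpr (Or.inl ⟨rfl, by omega⟩),
          (t1cells2 n hn _).mpr (Or.inl ⟨rfl, by omega⟩), by simp [Prod.ext_iff]; omega,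
          Or.inl ⟨rfl, by omega⟩, ?_⟩
        ext ⟨r, j⟩
        rw [Finset.mem_filter]
        simp only [Finset.mem_filter, t1cells2 n hn, Finset.mem_insert, Finset.mem_singleton,
          Prod.mk.injEq, t1Tv]
        split_ifs <;> first | omega | (simp_all only [false_and, and_false]; omega) | simp_all only [false_and, and_false]
      · refine ⟨(0, 2*i-4), (0, 2*i-3), (t1cells2 n hn _).mpr (Or.inl ⟨rfl, by omega⟩),
          (t1cells2 n hn _).mpr (Or.inl ⟨rfl, by omega⟩), by simp [Prod.ext_iff]; omega,
          Or.inl ⟨rfl, by omega⟩, ?_⟩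
        ext ⟨r, j⟩
        rw [Finset.mem_filter]
        simp only [Finset.mem_filter, t1cells2 n hn, Finset.mem_insert, Finset.mem_singleton,
          Prod.mk.injEq, t1Tv]
        split_ifs <;> first | omega | (simp_all only [false_and, and_false]; omega) | simp_all only [false_and, and_false]
  · intro r c hc
    rw [t1cells2 n hn] at hc
    simp only [t1Tv]
    split_ifs <;> first | omega | (simp_all only [false_and, and_false]; omega) | simp_all only [false_and, and_false]
  · intro r c hc
    rw [t1cells2 n hn] at hc
    simp only [t1Tv]
    split_ifs <;> first | omega | (simp_all only [false_and, and_false]; omega) | simp_all only [false_and, and_false]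

lemma t1partner (n : ℕ) (hn : 2 ≤ n) (e : ℕ × ℕ) (hmem : e ∈ cellsOf [2*n-2,1,1])
    (hadj : Adjacent e (2,0) ∨ Adjacent (2,0) e) : e = (1,0) := by
  obtain ⟨e1, e2⟩ := e
  rw [t1cells2 n hn] at hmem
  simp only [Prod.mk.injEq]
  rcases hadj with (⟨h1, h2⟩ | ⟨h1, h2⟩) | (⟨h1, h2⟩ | ⟨h1, h2⟩) <;>
    simp only [Prod.mk.injEq] at * <;> omega

lemma t1vert (n : ℕ) (hn : 2 ≤ n) (T : ℕ × ℕ → ℕ)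
    (hT : IsStdDominoTableau n [2*n-2,1,1] T) :
    ∃ m, 2 ≤ m ∧ m ≤ n ∧ T = t1Tv n m := by
  have hc20 : ((2:ℕ),(0:ℕ)) ∈ cellsOf [2*n-2,1,1] :=
    (t1cells2 n hn _).mpr (Or.inr (Or.inr ⟨rfl, rfl⟩))
  set m := T (2,0) with hm
  have hm1 : 1 ≤ m ∧ m ≤ n := Finset.mem_Icc.mp (hT.2.2.2.1 _ hc20)
  obtain ⟨c, d, hcmem, hdmem, hcd, hadj, hf⟩ :=
    hT.2.2.2.2.1 m (Finset.mem_Icc.mpr hm1)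
  have h20 : ((2:ℕ),(0:ℕ)) ∈ ({c, d} : Finset (ℕ×ℕ)) :=
    hf ▸ Finset.mem_filter.mpr ⟨hc20, rfl⟩
  have hpair : ({c, d} : Finset (ℕ×ℕ)) = {((1:ℕ),(0:ℕ)), ((2:ℕ),(0:ℕ))} := by
    rcases Finset.mem_insert.mp h20 with h | h
    · subst h
      have hd : d = (1,0) := t1partner n hn d hdmem (Or.inr hadj)
      rw [hd, Finset.pair_comm]
    · rw [Finset.mem_singleton] at h
      subst h
      have hc : c = (1,0) := t1partner n hn c hcmem (Or.inl hadj)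
      rw [hc]
  have hT10 : T (1,0) = m := by
    have : ((1:ℕ),(0:ℕ)) ∈ (cellsOf [2*n-2,1,1]).filter (fun x => T x = m) := by
      rw [hf, hpair]; exact Finset.mem_insert_self _ _
    exact (Finset.mem_filter.mp this).2
  have hrow0 : ∀ j, j < 2*n-2 → T (0,j) ≠ m := by
    intro j hj heq
    have : ((0:ℕ),j) ∈ ({c, d} : Finset (ℕ×ℕ)) :=
      hf ▸ Finset.mem_filter.mpr ⟨(t1cells2 n hn _).mpr (Or.inl ⟨rfl, hj⟩), heq⟩
    rw [hpair] at this
    simp [Prod.ext_iff] at this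
  have hm2 : 2 ≤ m := by
    have h00 : ((0:ℕ),(0:ℕ)) ∈ cellsOf [2*n-2,1,1] :=
      (t1cells2 n hn _).mpr (Or.inl ⟨rfl, by omega⟩)
    have h1 : 1 ≤ T (0,0) := (Finset.mem_Icc.mp (hT.2.2.2.1 _ h00)).1
    have h2 : T (0,0) ≤ T (1,0) :=
      hT.2.2.2.2.2.2 0 0 ((t1cells2 n hn _).mpr (Or.inr (Or.inl ⟨rfl, rfl⟩)))
    have h3 := hrow0 0 (by omega)
    omega
  -- column count for row 0
  have hcount : ∀ i, i ≤ n →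
      ((Finset.range (2*n-2)).filter (fun j => T (0,j) ≤ i)).card
        = 2*i - (if m ≤ i then 2 else 0) := by
    intro i hi
    have htot := t1count n [2*n-2,1,1] T hT i hi
    have hsplit := Finset.card_filter_add_card_filter_not
      (s := (cellsOf [2*n-2,1,1]).filter (fun c => T c ≤ i)) (p := fun c => c.1 = 0)
    rw [Finset.filter_filter, Finset.filter_filter] at hsplit
    have hA : (cellsOf [2*n-2,1,1]).filter (fun c => T c ≤ i ∧ c.1 = 0)
        = ((Finset.range (2*n-2)).filter (fun j => T (0,j) ≤ i)).image (fun j => ((0:ℕ), j)) := by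
      ext e
      simp only [Finset.mem_filter, Finset.mem_image, Finset.mem_range, t1cells2 n hn]
      constructor
      · rintro ⟨hmem, hle, h0⟩
        have he : ((0:ℕ), e.2) = e := Prod.ext h0.symm rfl
        refine ⟨e.2, ⟨?_, by rwa [he]⟩, he⟩
        rcases hmem with ⟨_, h⟩ | ⟨h, _⟩ | ⟨h, _⟩ <;> omega
      · rintro ⟨j, ⟨hj, hle⟩, rfl⟩
        exact ⟨Or.inl ⟨rfl, hj⟩, hle, rfl⟩
    have hB : (cellsOf [2*n-2,1,1]).filter (fun c => T c ≤ i ∧ ¬ c.1 = 0)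
        = if m ≤ i then ({((1:ℕ),(0:ℕ)), ((2:ℕ),(0:ℕ))} : Finset (ℕ×ℕ)) else ∅ := by
      ext ⟨r, j⟩
      rw [Finset.mem_filter]
      simp only [Finset.mem_filter, t1cells2 n hn]
      split_ifs with hmi
      · simp only [Finset.mem_insert, Finset.mem_singleton, Prod.mk.injEq]
        constructor
        · rintro ⟨hmem, hle, h0⟩
          rcases hmem with ⟨h, _⟩ | ⟨h1, h2⟩ | ⟨h1, h2⟩ <;> omega
        · rintro (⟨h1, h2⟩ | ⟨h1, h2⟩) <;> subst h1 <;> subst h2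
          · exact ⟨Or.inr (Or.inl ⟨rfl, rfl⟩), by rw [hT10]; exact hmi, by omega⟩
          · exact ⟨Or.inr (Or.inr ⟨rfl, rfl⟩), by rw [← hm]; exact hmi, by omega⟩
      · simp only [Finset.notMem_empty, iff_false]
        rintro ⟨hmem, hle, h0⟩
        rcases hmem with ⟨h, _⟩ | ⟨h1, h2⟩ | ⟨h1, h2⟩
        · omega
        · subst h1; subst h2; rw [hT10] at hle; omega
        · subst h1; subst h2; rw [← hm] at hle; omega
    rw [hA, hB] at hsplit
    rw [Finset.card_image_of_injective _
      (fun a b h => by simpa using congrArg Prod.snd h)] at hsplit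
    split_ifs at hsplit with hmi
    · rw [if_pos hmi]
      have : ({((1:ℕ),(0:ℕ)), ((2:ℕ),(0:ℕ))} : Finset (ℕ×ℕ)).card = 2 := by decide
      omega
    · rw [if_neg hmi]
      simp only [Finset.card_empty] at hsplit
      omega
  have hmono : ∀ a b, a ≤ b → b < 2*n-2 → T (0,a) ≤ T (0,b) := by
    intro a b hab hb
    induction b, hab using Nat.le_induction with
    | base => exact le_rfl
    | succ b hab ih =>
      exact le_trans (ih (by omega))
        (hT.2.2.2.2.2.1 0 b ((t1cells2 n hn _).mpr (Or.inl ⟨rfl, hb⟩)))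
  have hle_iff : ∀ i j, i ≤ n → j < 2*n-2 →
      (T (0,j) ≤ i ↔ j < 2*i - (if m ≤ i then 2 else 0)) := by
    intro i j hi hj
    rw [t1mono_iff (2*n-2) (fun j => T (0,j)) hmono i j hj, hcount i hi]
  have hval : ∀ j, j < 2*n-2 → T (0,j) = (if j < 2*m-2 then j/2+1 else j/2+2) := by
    intro j hj
    have h1 : 1 ≤ T (0,j) :=
      (Finset.mem_Icc.mp (hT.2.2.2.1 _ ((t1cells2 n hn _).mpr (Or.inl ⟨rfl, hj⟩)))).1
    by_cases hlt : j < 2*m-2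
    · have hup : T (0,j) ≤ j/2+1 := by
        refine (hle_iff (j/2+1) j (by omega) hj).mpr ?_
        rw [if_neg (by omega)]
        omega
      have hlow : j/2 = 0 ∨ ¬ (T (0,j) ≤ j/2) := by
        rcases Nat.eq_zero_or_pos (j/2) with h | h
        · exact Or.inl h
        · refine Or.inr (fun hle => ?_)
          have := (hle_iff (j/2) j (by omega) hj).mp hle
          rw [if_neg (by omega)] at this
          omega
      rw [if_pos hlt]
      omega
    · have hup : T (0,j) ≤ j/2+2 := by
        refine (hle_iff (j/2+2) j (by omega) hj).mpr ?_
        rw [if_pos (by omega)]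
        omega
      have hlow : ¬ (T (0,j) ≤ j/2+1) := by
        intro hle
        have := (hle_iff (j/2+1) j (by omega) hj).mp hle
        rw [if_pos (by omega)] at this
        omega
      rw [if_neg hlt]
      omega
  refine ⟨m, hm2, hm1.2, ?_⟩
  funext e
  obtain ⟨r, j⟩ := e
  by_cases hcell : (r, j) ∈ cellsOf [2*n-2,1,1]
  · have hc2 := (t1cells2 n hn _).mp hcell
    rcases hc2 with ⟨hr, hj⟩ | ⟨hr, hj⟩ | ⟨hr, hj⟩
    · subst hr
      have ht : t1Tv n m (0, j) = (if j < 2*m-2 then j/2+1 else j/2+2) := by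
        simp only [t1Tv]
        rw [if_pos (⟨trivial, hj⟩ : True ∧ j < 2*n-2)]
      rw [ht, hval j hj]
    · subst hr; subst hj
      have ht : t1Tv n m (1, 0) = m := by
        simp only [t1Tv]
        rw [if_neg (by simp), if_pos (⟨Or.inl trivial, trivial⟩ : (True ∨ (1:ℕ) = 2) ∧ True)]
      rw [ht, hT10]
    · subst hr; subst hj
      have ht : t1Tv n m (2, 0) = m := by
        simp only [t1Tv]
        rw [if_neg (by simp), if_pos (⟨Or.inr trivial, trivial⟩ : ((2:ℕ) = 1 ∨ True) ∧ True)]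
      rw [ht, ← hm]
  · have hz : T (r, j) = 0 := hT.2.2.1 _ hcell
    rw [t1cells2 n hn] at hcell
    rw [hz]
    simp only [t1Tv]
    split_ifs <;> omega

lemma t1rows_sub (l : List ℕ) (T : ℕ × ℕ → ℕ) (v : ℕ) (h : ∀ c, T c = v → c.1 = 0) :
    rowsOf l T v ⊆ {0} := by
  intro r hr
  simp only [rowsOf, Finset.mem_image, Finset.mem_filter] at hr
  obtain ⟨c, ⟨_, hv⟩, rfl⟩ := hr
  simp [h c hv]

lemma t1maxRow_zero (l : List ℕ) (T : ℕ × ℕ → ℕ) (v : ℕ) (h : ∀ c, T c = v → c.1 = 0) :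
    maxRow l T v = 0 := by
  rcases Finset.subset_singleton_iff.mp (t1rows_sub l T v h) with h' | h' <;> simp [maxRow, h']

lemma t1rows_card (l : List ℕ) (T : ℕ × ℕ → ℕ) (v : ℕ) (h : ∀ c, T c = v → c.1 = 0) :
    (rowsOf l T v).card ≤ 1 :=
  le_trans (Finset.card_le_card (t1rows_sub l T v h)) (by simp)

lemma t1T0_row (n v : ℕ) (hv : v ≠ 0) : ∀ c, t1T0 n c = v → c.1 = 0 := by
  rintro ⟨c1, c2⟩ h
  simp only [t1T0] at h
  split_ifs at h <;> omega

lemma t1des_T0 (n : ℕ) : DominoDes n [2*n] (t1T0 n) = ∅ := by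
  ext i
  simp only [DominoDes, Finset.mem_filter, Finset.mem_range, Finset.notMem_empty, iff_false]
  rintro ⟨hi, hcond⟩
  by_cases hi0 : i = 0
  · rw [if_pos hi0] at hcond
    have := t1rows_card [2*n] (t1T0 n) 1 (t1T0_row n 1 (by omega))
    omega
  · rw [if_neg hi0] at hcond
    rw [t1maxRow_zero [2*n] (t1T0 n) (i+1) (t1T0_row n (i+1) (by omega))] at hcond
    omega

lemma t1Tv_row0 (n m v : ℕ) (hm2 : 2 ≤ m) (hv : v ≠ m) (hv0 : v ≠ 0) :
    ∀ c, t1Tv n m c = v → c.1 = 0 := by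
  rintro ⟨c1, c2⟩ h
  simp only [t1Tv] at h
  split_ifs at h <;> omega

lemma t1Tv_rows_m (n m : ℕ) (hn : 2 ≤ n) (hm2 : 2 ≤ m) (hmn : m ≤ n) :
    rowsOf [2*n-2,1,1] (t1Tv n m) m = {1, 2} := by
  ext r
  simp only [rowsOf, Finset.mem_image, Finset.mem_filter, Finset.mem_insert,
    Finset.mem_singleton]
  constructor
  · rintro ⟨⟨c1, c2⟩, ⟨hmem, hval⟩, rfl⟩
    rw [t1cells2 n hn] at hmem
    simp only [t1Tv] at hval
    split_ifs at hval <;> omega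
  · rintro (rfl | rfl)
    · exact ⟨(1, 0), ⟨(t1cells2 n hn _).mpr (Or.inr (Or.inl ⟨rfl, rfl⟩)),
        by simp [t1Tv]⟩, rfl⟩
    · exact ⟨(2, 0), ⟨(t1cells2 n hn _).mpr (Or.inr (Or.inr ⟨rfl, rfl⟩)),
        by simp [t1Tv]⟩, rfl⟩

lemma t1maxRow_Tv_m (n m : ℕ) (hn : 2 ≤ n) (hm2 : 2 ≤ m) (hmn : m ≤ n) :
    maxRow [2*n-2,1,1] (t1Tv n m) m = 2 := by
  rw [maxRow, t1Tv_rows_m n m hn hm2 hmn]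
  rfl

lemma t1des_Tv (n m : ℕ) (hn : 2 ≤ n) (hm2 : 2 ≤ m) (hmn : m ≤ n) :
    DominoDes n [2*n-2,1,1] (t1Tv n m) = {m-1} := by
  ext i
  simp only [DominoDes, Finset.mem_filter, Finset.mem_range, Finset.mem_singleton]
  constructor
  · rintro ⟨hi, hcond⟩
    by_cases hi0 : i = 0
    · rw [if_pos hi0] at hcond
      have := t1rows_card [2*n-2,1,1] (t1Tv n m) 1 (t1Tv_row0 n m 1 hm2 (by omega) (by omega))
      omega
    · rw [if_neg hi0] at hcond
      by_contra hne
      have hip : i + 1 ≠ m := by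
        intro h
        exact hne (by omega)
      rw [t1maxRow_zero [2*n-2,1,1] (t1Tv n m) (i+1)
        (t1Tv_row0 n m (i+1) hm2 hip (by omega))] at hcond
      omega
  · rintro rfl
    refine ⟨by omega, ?_⟩
    rw [if_neg (by omega)]
    have h1 : m - 1 + 1 = m := by omega
    rw [h1, t1maxRow_Tv_m n m hn hm2 hmn,
      t1maxRow_zero [2*n-2,1,1] (t1Tv n m) (m-1) (t1Tv_row0 n m (m-1) hm2 (by omega) (by omega))]
    omega

lemma t1mod (n a : ℕ) (hn : 2 ≤ n) : ((a+1) % n < a % n) ↔ a % n = n - 1 := by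
  have hlt := Nat.mod_lt a (show 0 < n by omega)
  constructor
  · intro h
    by_contra hne
    have h2 : a % n < n - 1 := by omega
    have h3 : (a+1) % n = a % n + 1 := by
      rw [Nat.add_mod, Nat.mod_eq_of_lt (show 1 < n by omega), Nat.mod_eq_of_lt (by omega)]
    omega
  · intro h
    rw [Nat.add_mod, h, Nat.mod_eq_of_lt (show 1 < n by omega)]
    have h2 : n - 1 + 1 = n := by omega
    rw [h2, Nat.mod_self]
    omega

lemma t1des_rot1 (n : ℕ) (hn : 2 ≤ n) : DesSet n (rotPerm n 1) = ∅ := by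
  ext i
  simp only [DesSet, Finset.mem_filter, Finset.mem_range, Finset.notMem_empty, iff_false]
  rintro ⟨hi, hlt⟩
  simp only [rotPerm] at hlt
  by_cases hi0 : i = 0
  · subst hi0
    rw [if_pos (by omega), if_neg (by omega)] at hlt
    omega
  · rw [if_pos (by omega), if_pos (by omega)] at hlt
    have e1 : 1 - 1 + (i + 1 - 1) = i := by omega
    have e2 : 1 - 1 + (i - 1) = i - 1 := by omega
    rw [e1, e2, Nat.mod_eq_of_lt hi, Nat.mod_eq_of_lt (by omega)] at hlt
    omega

lemma t1des_rot (n k : ℕ) (hn : 2 ≤ n) (hk2 : 2 ≤ k) (hkn : k ≤ n) :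
    DesSet n (rotPerm n k) = {n - k + 1} := by
  ext i
  simp only [DesSet, Finset.mem_filter, Finset.mem_range, Finset.mem_singleton]
  constructor
  · rintro ⟨hi, hlt⟩
    simp only [rotPerm] at hlt
    by_cases hi0 : i = 0
    · subst hi0
      rw [if_pos (by omega), if_neg (by omega)] at hlt
      omega
    · rw [if_pos (by omega), if_pos (by omega)] at hlt
      have e1 : k - 1 + (i + 1 - 1) = (k - 2 + i) + 1 := by omega
      have e2 : k - 1 + (i - 1) = k - 2 + i := by omega
      rw [e1, e2] at hlt
      have hmod : (k - 2 + i + 1) % n < (k - 2 + i) % n := by exact_mod_cast (add_lt_add_iff_right (1:ℤ)).mp hlt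
      have hm := (t1mod n (k - 2 + i) hn).mp hmod
      rcases (show k - 2 + i < n ∨ (n ≤ k - 2 + i ∧ k - 2 + i - n < n - 1) by omega) with h | h
      · rw [Nat.mod_eq_of_lt h] at hm
        omega
      · rw [Nat.mod_eq_sub_mod h.1, Nat.mod_eq_of_lt (by omega)] at hm
        omega
  · rintro rfl
    refine ⟨by omega, ?_⟩
    simp only [rotPerm]
    rw [if_pos (by omega), if_pos (by omega)]
    have e1 : k - 1 + (n - k + 1 + 1 - 1) = n := by omega
    have e2 : k - 1 + (n - k + 1 - 1) = n - 1 := by omega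
    rw [e1, e2, Nat.mod_self, Nat.mod_eq_of_lt (by omega)]
    have : ((n - 1 : ℕ) : ℤ) ≥ 1 := by
      have : (1:ℕ) ≤ n - 1 := by omega
      exact_mod_cast this
    omega

def t1tab (n k : ℕ) : ℕ × ℕ → ℕ := if k ≤ 1 then t1T0 n else t1Tv n (n - k + 2)

lemma t1rot_val1 (n k : ℕ) (h1 : 1 ≤ k) (h2 : k ≤ n) : rotPerm n k 1 = k := by
  simp only [rotPerm, if_pos (show 1 ≤ 1 ∧ 1 ≤ n by omega)]
  have e1 : k - 1 + (1 - 1) = k - 1 := by omega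
  rw [e1, Nat.mod_eq_of_lt (by omega)]
  omega

lemma t1T0_10 (n : ℕ) : t1T0 n (1, 0) = 0 := by simp [t1T0]

lemma t1Tv_10 (n m : ℕ) : t1Tv n m (1, 0) = m := by simp [t1Tv]

lemma t1Tv_20 (n m : ℕ) : t1Tv n m (2, 0) = m := by simp [t1Tv]


/-- Type 1 signed arc permutations are `n` in number; the rotation starting at `k ≥ 2`
has descent set `{n-k+1}`; and they are in descent-preserving bijection with the
standard domino tableaux of shapes `(2n)` and `(2n-2,1,1)`, the rotation starting at
`k` corresponding to the tableau whose vertical domino (across rows 2 and 3) is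
labelled `n-k+2`. -/
theorem type1_bijection (n : ℕ) (hn : 2 ≤ n) :
    Set.ncard {π | Type1 n π} = n ∧
    (∀ k, 2 ≤ k → k ≤ n → DesSet n (rotPerm n k) = {n - k + 1}) ∧
    ∃ φ : (ℕ → ℤ) → ((ℕ × ℕ) → ℕ),
      Set.BijOn φ {π | Type1 n π}
        {T | IsStdDominoTableau n [2 * n] T ∨ IsStdDominoTableau n [2 * n - 2, 1, 1] T} ∧
      (∀ π : ℕ → ℤ, Type1 n π →
        (IsStdDominoTableau n [2 * n] (φ π) ∧
          DesSet n π = DominoDes n [2 * n] (φ π)) ∨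
        (IsStdDominoTableau n [2 * n - 2, 1, 1] (φ π) ∧
          DesSet n π = DominoDes n [2 * n - 2, 1, 1] (φ π))) ∧
      (∀ k, 2 ≤ k → k ≤ n →
        φ (rotPerm n k) (1, 0) = n - k + 2 ∧ φ (rotPerm n k) (2, 0) = n - k + 2) := by

  classical
  have hTy : ∀ k, 1 ≤ k → k ≤ n → Type1 n (rotPerm n k) := fun k h1 h2 => ⟨k, h1, h2, rfl⟩
  have hφrot : ∀ k, 1 ≤ k → k ≤ n → t1tab n ((rotPerm n k 1).toNat) = t1tab n k := by
    intro k h1 h2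
    rw [t1rot_val1 n k h1 h2, Int.toNat_natCast]
  refine ⟨?_, fun k hk2 hkn => t1des_rot n k hn hk2 hkn, ?_⟩
  · have hset : {π | Type1 n π} = ↑((Finset.Icc 1 n).image (rotPerm n)) := by
      ext π
      simp only [Set.mem_setOf_eq, Type1, Finset.coe_image, Set.mem_image, Finset.mem_coe,
        Finset.mem_Icc]
      constructor
      · rintro ⟨k, h1, h2, rfl⟩; exact ⟨k, ⟨h1, h2⟩, rfl⟩
      · rintro ⟨k, ⟨h1, h2⟩, rfl⟩; exact ⟨k, h1, h2, rfl⟩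
    have hinjOn : Set.InjOn (rotPerm n) ↑(Finset.Icc 1 n) := by
      intro a ha b hb hab
      simp only [Finset.coe_Icc, Set.mem_Icc] at ha hb
      have h := congrFun hab 1
      rw [t1rot_val1 n a ha.1 ha.2, t1rot_val1 n b hb.1 hb.2] at h
      exact_mod_cast h
    rw [hset, Set.ncard_coe_finset, Finset.card_image_of_injOn hinjOn, Nat.card_Icc]
    omega
  · refine ⟨fun π => t1tab n (π 1).toNat, ⟨?_, ?_, ?_⟩, ?_, ?_⟩
    · rintro π ⟨k, h1, h2, rfl⟩
      show t1tab n ((rotPerm n k 1).toNat) ∈ _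
      rw [hφrot k h1 h2]
      by_cases hk : k ≤ 1
      · left; simp only [t1tab, if_pos hk]; exact t1T0_SDT n hn
      · right; simp only [t1tab, if_neg hk]
        exact t1Tv_SDT n (n - k + 2) hn (by omega) (by omega)
    · rintro π ⟨k, h1, h2, rfl⟩ π' ⟨k', h1', h2', rfl⟩ heq
      simp only at heq
      rw [hφrot k h1 h2, hφrot k' h1' h2'] at heq
      have hkk : k = k' := by
        have h10 := congrFun heq (1, 0)
        by_cases hk : k ≤ 1 <;> by_cases hk' : k' ≤ 1
        · omega
        · simp only [t1tab, if_pos hk, if_neg hk'] at h10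
          rw [t1T0_10, t1Tv_10] at h10
          omega
        · simp only [t1tab, if_neg hk, if_pos hk'] at h10
          rw [t1T0_10, t1Tv_10] at h10
          omega
        · simp only [t1tab, if_neg hk, if_neg hk'] at h10
          rw [t1Tv_10, t1Tv_10] at h10
          omega
      rw [hkk]
    · rintro T (hA | hB)
      · refine ⟨rotPerm n 1, hTy 1 le_rfl (by omega), ?_⟩
        show t1tab n ((rotPerm n 1 1).toNat) = T
        rw [hφrot 1 le_rfl (by omega)]
        simp only [t1tab, if_pos le_rfl]
        exact (t1flat_eq n hn T hA).symm
      · obtain ⟨m, hm2, hmn, hTeq⟩ := t1vert n hn T hB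
        refine ⟨rotPerm n (n - m + 2), hTy _ (by omega) (by omega), ?_⟩
        show t1tab n ((rotPerm n (n - m + 2) 1).toNat) = T
        rw [hφrot _ (by omega) (by omega)]
        simp only [t1tab, if_neg (show ¬ n - m + 2 ≤ 1 by omega)]
        have e : n - (n - m + 2) + 2 = m := by omega
        rw [e]
        exact hTeq.symm
    · rintro π ⟨k, h1, h2, rfl⟩
      by_cases hk : k ≤ 1
      · left
        have hk1 : k = 1 := by omega
        subst hk1
        have he : t1tab n ((rotPerm n 1 1).toNat) = t1T0 n := by
          rw [hφrot 1 le_rfl (by omega)]; simp [t1tab]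
        constructor
        · show IsStdDominoTableau n [2 * n] (t1tab n ((rotPerm n 1 1).toNat))
          rw [he]; exact t1T0_SDT n hn
        · show DesSet n (rotPerm n 1) = DominoDes n [2 * n] (t1tab n ((rotPerm n 1 1).toNat))
          rw [he, t1des_rot1 n hn, t1des_T0 n]
      · right
        have he : t1tab n ((rotPerm n k 1).toNat) = t1Tv n (n - k + 2) := by
          rw [hφrot k h1 h2]; simp [t1tab, hk]
        constructor
        · show IsStdDominoTableau n [2 * n - 2, 1, 1] (t1tab n ((rotPerm n k 1).toNat))
          rw [he]; exact t1Tv_SDT n (n - k + 2) hn (by omega) (by omega)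
        · show DesSet n (rotPerm n k)
            = DominoDes n [2 * n - 2, 1, 1] (t1tab n ((rotPerm n k 1).toNat))
          rw [he, t1des_rot n k hn (by omega) h2,
            t1des_Tv n (n - k + 2) hn (by omega) (by omega)]
          have e : n - k + 2 - 1 = n - k + 1 := by omega
          rw [e]
    · intro k hk2 hkn
      have he : t1tab n ((rotPerm n k 1).toNat) = t1Tv n (n - k + 2) := by
        rw [hφrot k (by omega) hkn]; simp [t1tab]; omega
      constructor
      · show t1tab n ((rotPerm n k 1).toNat) (1, 0) = n - k + 2
        rw [he, t1Tv_10]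
      · show t1tab n ((rotPerm n k 1).toNat) (2, 0) = n - k + 2
        rw [he, t1Tv_20]
end
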